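/- arXiv:2410.08399 — 6 statements merged into one kernel-verified Lean document; each statement's English description precedes it below -/
import Mathlib

section
/- Let γ : S¹ → ℝ² be a continuous closed curve such that for every unit vector v ∈ ℝ², the function u ↦ v · γ(u) has exactly one local maximum point on S¹ (i.e. μ(γ,v) = 1). Then γ is a convex curve. -/
open Set

/-- Arc-length derivative along the curve `c` applied to the (possibly vector valued)
function `f`: `∂f/∂s := |∂c/∂u|⁻¹ ∂f/∂u`. -/
noncomputable def aderiv {E F : Type*} [NormedAddCommGroup E] [NormedSpace ℝ E]
    [NormedAddCommGroup F] [NormedSpace ℝ F]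
    (c : ℝ → E) (f : ℝ → F) (u : ℝ) : F :=
  ‖deriv c u‖⁻¹ • deriv f u

/-- Orthogonal projection of `ℝⁿ` onto the first two coordinates. -/
noncomputable def Pxy {n : ℕ} (x : EuclideanSpace ℝ (Fin n)) : EuclideanSpace ℝ (Fin 2) :=
  WithLp.toLp 2 (fun i : Fin 2 => if h : (i : ℕ) < n then x ⟨i, h⟩ else 0)

/-- A `2π`-periodic curve is simple: injective on a period. -/
def SimpleOnPeriod {α : Type*} (f : ℝ → α) : Prop :=
  ∀ u ∈ Set.Ico (0:ℝ) (2*Real.pi), ∀ v ∈ Set.Ico (0:ℝ) (2*Real.pi), f u = f v → u = v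

/-- A continuous closed plane curve is convex if it is simple and its image is the
frontier of the convex hull of its image. -/
def IsConvexCurve (c : ℝ → EuclideanSpace ℝ (Fin 2)) : Prop :=
  SimpleOnPeriod c ∧ Set.range c = frontier (convexHull ℝ (Set.range c))

/-- A closed plane curve is uniformly convex if it is simple, immersed, and its
curvature `k̄ = ‖γ̄_s̄s̄‖` is positive everywhere. -/
def IsUniformlyConvexCurve (c : ℝ → EuclideanSpace ℝ (Fin 2)) : Prop :=
  SimpleOnPeriod c ∧ (∀ u, deriv c u ≠ 0) ∧ ∀ u, 0 < ‖aderiv c (aderiv c c) u‖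

/-- A solution of the Space Curve Shortening flow on `[0,T)` in `ℝⁿ`. -/
structure IsCSF (n : ℕ) (T : ℝ) (γ : ℝ → ℝ → EuclideanSpace ℝ (Fin n)) : Prop where
  smooth : ContDiffOn ℝ (⊤ : ℕ∞) (fun p : ℝ × ℝ => γ p.1 p.2) (Set.univ ×ˢ Set.Ico 0 T)
  periodic : ∀ u t, γ (u + 2*Real.pi) t = γ u t
  immersed : ∀ (u : ℝ), ∀ t ∈ Set.Ico (0:ℝ) T, deriv (fun v => γ v t) u ≠ 0
  flow : ∀ (u : ℝ), ∀ t ∈ Set.Ico (0:ℝ) T,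
    derivWithin (fun τ => γ u τ) (Set.Ico 0 T) t
      = aderiv (fun v => γ v t) (fun v => aderiv (fun w => γ w t) (fun w => γ w t) v) u

/-- Counterclockwise rotation of a plane vector by `π/2`. -/
noncomputable def rot90 (w : EuclideanSpace ℝ (Fin 2)) : EuclideanSpace ℝ (Fin 2) :=
  (WithLp.equiv 2 (Fin 2 → ℝ)).symm ![-(w 1), w 0]

/-- Signed curvature of a plane curve, defined by `γ̄_s̄s̄ = k̄ N̄` with `N̄ = rot90 T̄`. -/
noncomputable def signedCurv (c : ℝ → EuclideanSpace ℝ (Fin 2)) (u : ℝ) : ℝ :=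
  inner ℝ (aderiv c (aderiv c c) u) (rot90 (aderiv c c u))

/-- There exist `k` points `u₁ < ⋯ < u_k < u₁ + 2π` on which `h` changes sign cyclically. -/
def SignChangeSeq (h : ℝ → ℝ) (k : ℕ) : Prop :=
  ∃ u : ℕ → ℝ, (∀ i j, i < j → j < k → u i < u j) ∧
    (0 < k → u (k-1) < u 0 + 2*Real.pi) ∧
    (∀ i, i+1 < k → h (u i) * h (u (i+1)) < 0) ∧
    (0 < k → h (u (k-1)) * h (u 0) < 0)

/-- The sign-changing number of a `2π`-periodic function. -/
noncomputable def signChanges (h : ℝ → ℝ) : ℕ∞ :=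
  sSup {N : ℕ∞ | ∃ k : ℕ, N = (k : ℕ∞) ∧ SignChangeSeq h k}

/-- The three-point condition with constant `Δ`: every affine plane meeting the curve in
at least three parameter values (per period) has slope at most `Δ`. -/
def ThreePointCond (γ : ℝ → EuclideanSpace ℝ (Fin 3)) (Δ : ℝ) : Prop :=
  ∀ (m : EuclideanSpace ℝ (Fin 3)) (d : ℝ), m ≠ 0 →
    (3 : ℕ∞) ≤ ({u ∈ Set.Ico (0:ℝ) (2*Real.pi) | (inner ℝ m (γ u) : ℝ) = d}).encard →
    Real.sqrt ((m 0)^2 + (m 1)^2) ≤ Δ * |m 2|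

/-- `u₀` is a local maximum point of the `2π`-periodic function `f` (viewed on `S¹`). -/
def IsLocalMaxPt (f : ℝ → ℝ) (u₀ : ℝ) : Prop :=
  ∃ ε > (0:ℝ), ∀ u : ℝ, |u - u₀| < ε → f u ≤ f u₀


section Statement6Aux

open Real Filter

/-- The unique-local-maximum hypothesis of Statement 6. -/
def S6Hyp (γ : ℝ → EuclideanSpace ℝ (Fin 2)) : Prop :=
  ∀ v : EuclideanSpace ℝ (Fin 2), ‖v‖ = 1 →
    ∃ u₀ ∈ Set.Ico (0:ℝ) (2*Real.pi),
      IsLocalMaxPt (fun u => (inner ℝ v (γ u) : ℝ)) u₀ ∧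
      ∀ u ∈ Set.Ico (0:ℝ) (2*Real.pi),
        IsLocalMaxPt (fun u' => (inner ℝ v (γ u') : ℝ)) u → u = u₀

variable {γ : ℝ → EuclideanSpace ℝ (Fin 2)}

lemma s6_gper (hper : ∀ u, γ (u + 2*π) = γ u) (k : ℤ) (x : ℝ) : γ (x + 2*π*k) = γ x := by
  have h : Function.Periodic γ (2*π) := hper
  have := (h.int_mul k) x
  rw [show (k:ℝ) * (2*π) = 2*π*k by ring] at this
  exact this

lemma s6_repr (x a : ℝ) : ∃ y ∈ Ico a (a + 2*π), ∃ k : ℤ, x = y + 2*π*k := by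
  refine ⟨toIcoMod Real.two_pi_pos a x, toIcoMod_mem_Ico _ _ _, toIcoDiv Real.two_pi_pos a x, ?_⟩
  have h := self_sub_toIcoMod Real.two_pi_pos a x
  rw [zsmul_eq_mul] at h
  linarith [h]

lemma s6_localmax_shift (hper : ∀ u, γ (u + 2*π) = γ u) {v : EuclideanSpace ℝ (Fin 2)} {x : ℝ}
    (k : ℤ) (h : IsLocalMaxPt (fun u => (inner ℝ v (γ u) : ℝ)) x) :
    IsLocalMaxPt (fun u => (inner ℝ v (γ u) : ℝ)) (x + 2*π*k) := by
  obtain ⟨ε, hε, hle⟩ := h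
  refine ⟨ε, hε, fun u hu => ?_⟩
  have h1 : γ u = γ (u - 2*π*k) := by
    conv_lhs => rw [show u = (u - 2*π*k) + 2*π*k by ring]
    exact s6_gper hper k _
  have h2 : γ (x + 2*π*k) = γ x := s6_gper hper k x
  simp only [h1, h2]
  exact hle _ (by rw [show u - 2*π*k - x = u - (x + 2*π*k) by ring]; exact hu)

lemma s6_max_exists (hcont : Continuous γ) (hper : ∀ u, γ (u + 2*π) = γ u)
    (v : EuclideanSpace ℝ (Fin 2)) :
    ∃ m ∈ Ico (0:ℝ) (2*π), ∀ u, (inner ℝ v (γ u) : ℝ) ≤ inner ℝ v (γ m) := by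
  have hf : Continuous fun u => (inner ℝ v (γ u) : ℝ) := continuous_const.inner hcont
  obtain ⟨x, hx, hmax⟩ := isCompact_Icc.exists_isMaxOn (α := ℝ)
    (Set.nonempty_Icc.2 (by positivity : (0:ℝ) ≤ 2*π)) hf.continuousOn
  obtain ⟨y, hy, k, hxy⟩ := s6_repr x 0
  rw [zero_add] at hy
  have hgy : γ x = γ y := by rw [hxy]; exact s6_gper hper k y
  refine ⟨y, hy, fun u => ?_⟩
  obtain ⟨z, hz, k', hz'⟩ := s6_repr u 0
  rw [zero_add] at hz
  have hgz : γ u = γ z := by rw [hz']; exact s6_gper hper k' z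
  have hzIcc : z ∈ Icc (0:ℝ) (2*π) := ⟨hz.1, hz.2.le⟩
  have h3 : (inner ℝ v (γ z) : ℝ) ≤ inner ℝ v (γ x) := hmax hzIcc
  rw [hgz, ← hgy]
  exact h3

lemma s6_localmax_global (hcont : Continuous γ) (hper : ∀ u, γ (u + 2*π) = γ u)
    (hμ : S6Hyp γ) {v : EuclideanSpace ℝ (Fin 2)} (hv : ‖v‖ = 1) {x : ℝ}
    (hx : IsLocalMaxPt (fun u => (inner ℝ v (γ u) : ℝ)) x) :
    ∀ u, (inner ℝ v (γ u) : ℝ) ≤ inner ℝ v (γ x) := by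
  obtain ⟨u₀, hu₀, _, huniq⟩ := hμ v hv
  obtain ⟨m, hm, hmax⟩ := s6_max_exists hcont hper v
  have hmloc : IsLocalMaxPt (fun u => (inner ℝ v (γ u) : ℝ)) m := ⟨1, one_pos, fun u _ => hmax u⟩
  have hmeq : m = u₀ := huniq m hm hmloc
  obtain ⟨x', hx', k, hxk⟩ := s6_repr x 0
  rw [zero_add] at hx'
  have hx'loc : IsLocalMaxPt (fun u => (inner ℝ v (γ u) : ℝ)) x' := by
    have := s6_localmax_shift hper (-k) hx
    rw [show x + 2*π*(-k:ℤ) = x' by push_cast; rw [hxk]; ring] at this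
    exact this
  have hx'eq : x' = u₀ := huniq x' hx' hx'loc
  have hgx : γ x = γ x' := by rw [hxk]; exact s6_gper hper k x'
  intro u
  rw [hgx, hx'eq, ← hmeq]
  exact hmax u

lemma s6_max_pt_eq (hcont : Continuous γ) (hper : ∀ u, γ (u + 2*π) = γ u)
    (hμ : S6Hyp γ) {v : EuclideanSpace ℝ (Fin 2)} (hv : ‖v‖ = 1) {s t : ℝ}
    (hs : s ∈ Ico (0:ℝ) (2*π)) (ht : t ∈ Ico (0:ℝ) (2*π))
    (hms : ∀ u, (inner ℝ v (γ u) : ℝ) ≤ inner ℝ v (γ s))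
    (hmt : ∀ u, (inner ℝ v (γ u) : ℝ) ≤ inner ℝ v (γ t)) : s = t := by
  obtain ⟨u₀, hu₀, _, huniq⟩ := hμ v hv
  have h1 : s = u₀ := huniq s hs ⟨1, one_pos, fun u _ => hms u⟩
  have h2 : t = u₀ := huniq t ht ⟨1, one_pos, fun u _ => hmt u⟩
  rw [h1, h2]

lemma s6_nonconst (hμ : S6Hyp γ) {v : EuclideanSpace ℝ (Fin 2)} (hv : ‖v‖ = 1) :
    ∃ u, (inner ℝ v (γ u) : ℝ) ≠ inner ℝ v (γ 0) := by
  by_contra h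
  push_neg at h
  obtain ⟨u₀, hu₀, _, huniq⟩ := hμ v hv
  have hloc : ∀ x : ℝ, IsLocalMaxPt (fun u => (inner ℝ v (γ u) : ℝ)) x := fun x =>
    ⟨1, one_pos, fun u _ => by simp only []; rw [h u, h x]⟩
  have h2π : (1:ℝ) < 2*π := by have := Real.pi_gt_three; linarith
  have h0 : (0:ℝ) = u₀ := huniq 0 ⟨le_refl 0, by linarith⟩ (hloc 0)
  have h1 : (1:ℝ) = u₀ := huniq 1 ⟨zero_le_one, h2π⟩ (hloc 1)
  rw [← h0] at h1
  exact one_ne_zero h1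

lemma s6_span_top (hμ : S6Hyp γ) : affineSpan ℝ (Set.range γ) = ⊤ := by
  by_contra h
  have hne : (Set.range γ).Nonempty := ⟨γ 0, 0, rfl⟩
  have hSne : ((affineSpan ℝ (Set.range γ) : Set (EuclideanSpace ℝ (Fin 2)))).Nonempty :=
    hne.mono (subset_affineSpan ℝ _)
  have hdir : (affineSpan ℝ (Set.range γ)).direction ≠ ⊤ := by
    intro h'
    exact h ((AffineSubspace.direction_eq_top_iff_of_nonempty hSne).mp h')
  have horth : ((affineSpan ℝ (Set.range γ)).direction)ᗮ ≠ ⊥ :=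
    fun h' => hdir (Submodule.orthogonal_eq_bot_iff.mp h')
  obtain ⟨v₀, hv₀mem, hv₀⟩ := Submodule.exists_mem_ne_zero_of_ne_bot horth
  have hvconst : ∀ u, (inner ℝ v₀ (γ u) : ℝ) = inner ℝ v₀ (γ 0) := by
    intro u
    have hmem : γ u - γ 0 ∈ (affineSpan ℝ (Set.range γ)).direction := by
      have h1 : γ u ∈ affineSpan ℝ (Set.range γ) :=
        subset_affineSpan ℝ (Set.range γ) (Set.mem_range_self u)
      have h2 : γ (0:ℝ) ∈ affineSpan ℝ (Set.range γ) :=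
        subset_affineSpan ℝ (Set.range γ) (Set.mem_range_self 0)
      have := AffineSubspace.vsub_mem_direction h1 h2
      simpa using this
    have := (Submodule.mem_orthogonal _ v₀).mp hv₀mem _ hmem
    have h2 : (inner ℝ (γ u - γ 0) v₀ : ℝ) = 0 := this
    rw [real_inner_comm] at h2
    rw [inner_sub_right] at h2
    linarith
  set v := ‖v₀‖⁻¹ • v₀ with hvdef
  have hv : ‖v‖ = 1 := norm_smul_inv_norm hv₀
  obtain ⟨u, hu⟩ := s6_nonconst hμ hv
  apply hu
  rw [hvdef]
  rw [real_inner_smul_left, real_inner_smul_left, hvconst u]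

lemma s6_int_nonempty (hμ : S6Hyp γ) :
    (interior (convexHull ℝ (Set.range γ))).Nonempty := by
  rw [Convex.interior_nonempty_iff_affineSpan_eq_top (convex_convexHull ℝ _)]
  rw [affineSpan_convexHull]
  exact s6_span_top hμ

lemma s6_support (hμ : S6Hyp γ) {p : EuclideanSpace ℝ (Fin 2)}
    (hpi : p ∉ interior (convexHull ℝ (Set.range γ))) :
    ∃ v : EuclideanSpace ℝ (Fin 2), ‖v‖ = 1 ∧
      ∀ x ∈ closure (convexHull ℝ (Set.range γ)), (inner ℝ v x : ℝ) ≤ inner ℝ v p := by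
  have hint := s6_int_nonempty hμ
  set K := convexHull ℝ (Set.range γ) with hK
  obtain ⟨f, hf⟩ := geometric_hahn_banach_open_point
    ((convex_convexHull ℝ _).interior) isOpen_interior hpi
  obtain ⟨a, ha⟩ := hint
  have hcl : ∀ x ∈ closure K, f x ≤ f p := by
    intro x hx
    have hseg : ∀ t : ℝ, t ∈ Ioc (0:ℝ) 1 → f (t • a + (1-t) • x) < f p := by
      intro t ht
      exact hf _ ((convex_convexHull ℝ _).combo_interior_closure_mem_interior ha hx ht.1
        (by linarith [ht.2]) (by ring))
    have htend : Tendsto (fun t : ℝ => f (t • a + (1-t) • x)) (nhdsWithin 0 (Ioi 0))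
        (nhds (f x)) := by
      have hcont : Continuous fun t : ℝ => f (t • a + (1-t) • x) := by fun_prop
      have := (hcont.tendsto 0).mono_left (nhdsWithin_le_nhds (s := Ioi (0:ℝ)))
      simpa using this
    refine le_of_tendsto htend ?_
    filter_upwards [Ioo_mem_nhdsGT_of_mem (Set.left_mem_Ico.mpr one_pos)] with t ht
    exact (hseg t ⟨ht.1, ht.2.le⟩).le
  have hfne : f ≠ 0 := by
    intro h0
    have := hf a ha
    rw [h0] at this
    simp at this
  set v₀ := (InnerProductSpace.toDual ℝ (EuclideanSpace ℝ (Fin 2))).symm f with hv₀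
  have hv₀app : ∀ x, (inner ℝ v₀ x : ℝ) = f x := fun x => InnerProductSpace.toDual_symm_apply
  have hv₀ne : v₀ ≠ 0 := by
    intro h0
    apply hfne
    ext x
    have := hv₀app x
    rw [h0] at this
    simpa using this.symm
  refine ⟨‖v₀‖⁻¹ • v₀, norm_smul_inv_norm hv₀ne, fun x hx => ?_⟩
  rw [real_inner_smul_left, real_inner_smul_left, hv₀app, hv₀app]
  have := hcl x hx
  have hpos : (0:ℝ) ≤ ‖v₀‖⁻¹ := by positivity
  exact mul_le_mul_of_nonneg_left this hpos

lemma s6_range_compact (hcont : Continuous γ) (hper : ∀ u, γ (u + 2*π) = γ u) :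
    IsCompact (Set.range γ) := by
  have h : Set.range γ = γ '' Icc 0 (2*π) := by
    apply Subset.antisymm
    · rintro x ⟨u, rfl⟩
      obtain ⟨y, hy, k, hyk⟩ := s6_repr u 0
      rw [zero_add] at hy
      exact ⟨y, ⟨hy.1, hy.2.le⟩, by rw [hyk]; exact (s6_gper hper k y).symm ▸ rfl⟩
    · rintro x ⟨u, _, rfl⟩
      exact ⟨u, rfl⟩
  rw [h]
  exact isCompact_Icc.image hcont

lemma s6_conc (hcont : Continuous γ) (hper : ∀ u, γ (u + 2*π) = γ u) (hμ : S6Hyp γ)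
    {v : EuclideanSpace ℝ (Fin 2)} (hv : ‖v‖ = 1) {m : ℝ}
    (hm : m ∈ Ico (0:ℝ) (2*π))
    (hmax : ∀ u, (inner ℝ v (γ u) : ℝ) ≤ inner ℝ v (γ m))
    {ε : ℝ} (hε : 0 < ε) :
    ∃ δ > (0:ℝ), ∀ u, (inner ℝ v (γ m) : ℝ) - δ < inner ℝ v (γ u) → ‖γ u - γ m‖ < ε := by
  classical
  have huniqmax : ∀ s ∈ Ico (0:ℝ) (2*π), (∀ u, (inner ℝ v (γ u) : ℝ) ≤ inner ℝ v (γ s)) → s = m :=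
    fun s hs hsm => s6_max_pt_eq hcont hper hμ hv hs hm hsm hmax
  set f := fun u => (inner ℝ v (γ u) : ℝ) with hf
  have hfc : Continuous f := continuous_const.inner hcont
  set A := Icc (0:ℝ) (2*π) ∩ {u | ε ≤ ‖γ u - γ m‖} with hA
  have hAc : IsCompact A := isCompact_Icc.inter_right
    (isClosed_le continuous_const ((hcont.sub continuous_const).norm))
  by_cases hAe : A.Nonempty
  · obtain ⟨a, ha, hamax⟩ := hAc.exists_isMaxOn hAe hfc.continuousOn
    have hfa : f a < f m := by
      rcases lt_or_eq_of_le (hmax a) with h | h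
      · exact h
      · exfalso
        obtain ⟨y, hy, k, hyk⟩ := s6_repr a 0
        rw [zero_add] at hy
        have hgy : γ a = γ y := by rw [hyk]; exact s6_gper hper k y
        have : y = m := huniqmax y hy (fun u => by rw [← hgy, h]; exact hmax u)
        have : γ a = γ m := by rw [hgy, this]
        have h2 := ha.2
        simp only [mem_setOf_eq, this] at h2
        simp at h2
        linarith
    refine ⟨f m - f a, by linarith, fun u hu => ?_⟩
    obtain ⟨y, hy, k, hyk⟩ := s6_repr u 0
    rw [zero_add] at hy
    have hgy : γ u = γ y := by rw [hyk]; exact s6_gper hper k y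
    by_contra hcon
    push_neg at hcon
    have hyA : y ∈ A := ⟨⟨hy.1, hy.2.le⟩, show ε ≤ ‖γ y - γ m‖ by rw [← hgy]; exact hcon⟩
    have h3 : (inner ℝ v (γ y) : ℝ) ≤ inner ℝ v (γ a) := hamax hyA
    have h2 : (inner ℝ v (γ u) : ℝ) ≤ inner ℝ v (γ a) := by rw [hgy]; exact h3
    simp only [hf] at hu
    linarith
  · refine ⟨1, one_pos, fun u _ => ?_⟩
    obtain ⟨y, hy, k, hyk⟩ := s6_repr u 0
    rw [zero_add] at hy
    have hgy : γ u = γ y := by rw [hyk]; exact s6_gper hper k y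
    by_contra hcon
    push_neg at hcon
    exact hAe ⟨y, ⟨hy.1, hy.2.le⟩, show ε ≤ ‖γ y - γ m‖ by rw [← hgy]; exact hcon⟩

lemma s6_conc2 (hcont : Continuous γ) (hper : ∀ u, γ (u + 2*π) = γ u) (hμ : S6Hyp γ)
    {v : EuclideanSpace ℝ (Fin 2)} (hv : ‖v‖ = 1) {m : ℝ}
    (hm : m ∈ Ico (0:ℝ) (2*π))
    (hmax : ∀ u, (inner ℝ v (γ u) : ℝ) ≤ inner ℝ v (γ m))
    {ε : ℝ} (hε : 0 < ε) :
    ∃ δ > (0:ℝ), ∀ x ∈ convexHull ℝ (Set.range γ),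
      (inner ℝ v (γ m) : ℝ) - δ < inner ℝ v x → ‖x - γ m‖ ≤ ε := by
  classical
  have hrange : IsCompact (Set.range γ) := s6_range_compact hcont hper
  set M : ℝ := inner ℝ v (γ m) with hM
  obtain ⟨δ₀, hδ₀, hconc⟩ := s6_conc hcont hper hμ hv hm hmax (by linarith : (0:ℝ) < ε/2)
  obtain ⟨R₀, hR₀⟩ := hrange.isBounded.subset_closedBall (γ m)
  set R : ℝ := max R₀ 1 with hR
  have hRpos : (0:ℝ) < R := lt_of_lt_of_le one_pos (le_max_right _ _)
  have hrangeball : Set.range γ ⊆ Metric.closedBall (γ m) R :=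
    hR₀.trans (Metric.closedBall_subset_closedBall (le_max_left _ _))
  have hKball : convexHull ℝ (Set.range γ) ⊆ Metric.closedBall (γ m) R :=
    convexHull_min hrangeball (convex_closedBall _ _)
  have hKhalf : convexHull ℝ (Set.range γ) ⊆ {x | (inner ℝ v x : ℝ) ≤ M} :=
    convexHull_min (fun x ⟨u, hu⟩ => by rw [← hu]; exact hmax u)
      (convex_halfSpace_le (⟨fun a b => inner_add_right _ _ _,
        fun c a => real_inner_smul_right _ _ _⟩ : IsLinearMap ℝ (fun x => (inner ℝ v x : ℝ))) M)
  set Snear := Set.range γ ∩ {x | M - δ₀ < inner ℝ v x} with hSnear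
  set Sfar := Set.range γ ∩ {x | (inner ℝ v x : ℝ) ≤ M - δ₀} with hSfar
  have hunion : Set.range γ = Snear ∪ Sfar := by
    ext x; constructor
    · intro hx
      rcases le_or_gt (inner ℝ v x : ℝ) (M - δ₀) with h | h
      · exact Or.inr ⟨hx, h⟩
      · exact Or.inl ⟨hx, h⟩
    · rintro (⟨h, _⟩ | ⟨h, _⟩) <;> exact h
  have hnearball : Snear ⊆ Metric.closedBall (γ m) (ε/2) := by
    rintro x ⟨⟨u, hu⟩, hx⟩
    rw [Metric.mem_closedBall, dist_eq_norm]
    rw [← hu] at hx ⊢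
    exact (hconc u hx).le
  have hnearhull : convexHull ℝ Snear ⊆ Metric.closedBall (γ m) (ε/2) :=
    convexHull_min hnearball (convex_closedBall _ _)
  have hfarhull : convexHull ℝ Sfar ⊆ {x | (inner ℝ v x : ℝ) ≤ M - δ₀} :=
    convexHull_min (fun x hx => hx.2)
      (convex_halfSpace_le (⟨fun a b => inner_add_right _ _ _,
        fun c a => real_inner_smul_right _ _ _⟩ : IsLinearMap ℝ (fun x => (inner ℝ v x : ℝ))) _)
  refine ⟨min (δ₀ * (ε / (2*R))) δ₀, lt_min (by positivity) hδ₀, fun x hxK hxin => ?_⟩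
  by_cases hfe : Sfar.Nonempty
  · have hne : Snear.Nonempty := ⟨γ m, ⟨m, rfl⟩, by simp [hM]; linarith⟩
    have hx2 : x ∈ convexJoin ℝ (convexHull ℝ Snear) (convexHull ℝ Sfar) := by
      rw [← convexHull_union hne hfe, ← hunion]
      exact hxK
    rw [mem_convexJoin] at hx2
    obtain ⟨a, ha, b, hb, hseg⟩ := hx2
    obtain ⟨ta, tb, hta, htb, htab, hx⟩ := hseg
    have hia : (inner ℝ v a : ℝ) ≤ M :=
      hKhalf (convexHull_mono (by rw [hunion]; exact subset_union_left) ha)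
    have hib : (inner ℝ v b : ℝ) ≤ M - δ₀ := hfarhull hb
    have hinner : (inner ℝ v x : ℝ) = ta * inner ℝ v a + tb * inner ℝ v b := by
      rw [← hx, inner_add_right, real_inner_smul_right, real_inner_smul_right]
    have htbb : tb * δ₀ < min (δ₀ * (ε / (2*R))) δ₀ := by
      have h1 : (inner ℝ v x : ℝ) ≤ ta * M + tb * (M - δ₀) := by
        rw [hinner]
        gcongr
      have h2 : ta * M + tb * (M - δ₀) = M - tb * δ₀ := by
        have : ta = 1 - tb := by linarith
        rw [this]; ring
      rw [h2] at h1
      linarith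
    have htb2 : tb ≤ ε / (2*R) := by
      have h6 := lt_of_lt_of_le htbb (min_le_left _ _)
      have h7 : tb * δ₀ < (ε / (2*R)) * δ₀ := by rw [mul_comm (ε / (2*R))]; linarith
      exact (lt_of_mul_lt_mul_right h7 hδ₀.le).le
    have hna : ‖a - γ m‖ ≤ ε/2 := by
      have := hnearhull ha
      rwa [Metric.mem_closedBall, dist_eq_norm] at this
    have hnb : ‖b - γ m‖ ≤ R := by
      have hbK : b ∈ convexHull ℝ (Set.range γ) :=
        convexHull_mono (by rw [hunion]; exact subset_union_right) hb
      have := hKball hbK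
      rwa [Metric.mem_closedBall, dist_eq_norm] at this
    have hxd : x - γ m = ta • (a - γ m) + tb • (b - γ m) := by
      have h5 : ta • (a - γ m) + tb • (b - γ m) = ta • a + tb • b - (ta + tb) • γ m := by
        module
      rw [h5, htab, one_smul, hx]
    calc ‖x - γ m‖ ≤ ta * ‖a - γ m‖ + tb * ‖b - γ m‖ := by
          rw [hxd]
          refine (norm_add_le _ _).trans ?_
          rw [norm_smul, norm_smul, Real.norm_eq_abs, Real.norm_eq_abs,
            abs_of_nonneg hta, abs_of_nonneg htb]
      _ ≤ 1 * (ε/2) + (ε / (2*R)) * R := by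
          have hta1 : ta ≤ 1 := by linarith
          exact add_le_add (mul_le_mul hta1 hna (norm_nonneg _) zero_le_one)
            (mul_le_mul htb2 hnb (norm_nonneg _) (by positivity))
      _ ≤ ε := by
          rw [one_mul]
          have : ε / (2*R) * R = ε/2 := by field_simp
          rw [this]; linarith
  · have hrsub : Set.range γ ⊆ Snear := by
      rw [hunion]
      simp [not_nonempty_iff_eq_empty.mp hfe]
    have : x ∈ Metric.closedBall (γ m) (ε/2) :=
      (convexHull_min (hrsub.trans hnearball) (convex_closedBall _ _)) hxK
    rw [Metric.mem_closedBall, dist_eq_norm] at this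
    linarith

lemma s6_eq_max_pt (hcont : Continuous γ) (hper : ∀ u, γ (u + 2*π) = γ u) (hμ : S6Hyp γ)
    {p : EuclideanSpace ℝ (Fin 2)} {v : EuclideanSpace ℝ (Fin 2)} (hv : ‖v‖ = 1) {m : ℝ}
    (hm : m ∈ Ico (0:ℝ) (2*π))
    (hpc : p ∈ closure (convexHull ℝ (Set.range γ)))
    (hsupp : ∀ u, (inner ℝ v (γ u) : ℝ) ≤ inner ℝ v p)
    (hmax : ∀ u, (inner ℝ v (γ u) : ℝ) ≤ inner ℝ v (γ m)) :
    p = γ m := by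
  set M : ℝ := inner ℝ v (γ m) with hM
  have hKhalf : convexHull ℝ (Set.range γ) ⊆ {x | (inner ℝ v x : ℝ) ≤ M} :=
    convexHull_min (fun x ⟨u, hu⟩ => by rw [← hu]; exact hmax u)
      (convex_halfSpace_le (⟨fun a b => inner_add_right _ _ _,
        fun c a => real_inner_smul_right _ _ _⟩ : IsLinearMap ℝ (fun x => (inner ℝ v x : ℝ))) M)
  have hpM : (inner ℝ v p : ℝ) = M := by
    have h1 : (inner ℝ v p : ℝ) ≤ M := by
      have hcl : closure (convexHull ℝ (Set.range γ)) ⊆ {x | (inner ℝ v x : ℝ) ≤ M} :=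
        closure_minimal hKhalf
          (isClosed_le (continuous_const.inner continuous_id') continuous_const)
      exact hcl hpc
    have h2 : M ≤ inner ℝ v p := hsupp m
    linarith
  by_contra hne
  have hεp : 0 < ‖p - γ m‖ := by
    rw [norm_pos_iff, sub_ne_zero]
    exact hne
  set ε := ‖p - γ m‖ with hε
  obtain ⟨δ, hδ, hc2⟩ := s6_conc2 hcont hper hμ hv hm hmax (by linarith : (0:ℝ) < ε/2)
  obtain ⟨y, hy, hydist⟩ := Metric.mem_closure_iff.mp hpc (min (ε/4) δ) (lt_min (by linarith) hδ)
  have hyin : M - δ < inner ℝ v y := by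
    have h3 : |(inner ℝ v (y - p) : ℝ)| ≤ ‖v‖ * ‖y - p‖ := abs_real_inner_le_norm v _
    rw [hv, one_mul, inner_sub_right] at h3
    have h4 : ‖y - p‖ < δ := by
      rw [norm_sub_rev, ← dist_eq_norm]
      exact lt_of_lt_of_le hydist (min_le_right _ _)
    have h5 := abs_le.mp h3
    have h6 : (inner ℝ v p : ℝ) - ‖y - p‖ ≤ inner ℝ v y := by linarith [h5.1]
    rw [hpM] at h6
    linarith
  have hynear := hc2 y hy hyin
  have htri : ‖p - γ m‖ ≤ ‖p - y‖ + ‖y - γ m‖ := by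
    have : p - γ m = (p - y) + (y - γ m) := by abel
    rw [this]
    exact norm_add_le _ _
  have hpy : ‖p - y‖ < ε/4 := by
    rw [← dist_eq_norm]
    exact lt_of_lt_of_le hydist (min_le_left _ _)
  have : ε ≤ ε/4 + ε/2 := by
    calc ε = ‖p - γ m‖ := hε
      _ ≤ ‖p - y‖ + ‖y - γ m‖ := htri
      _ ≤ ε/4 + ε/2 := by linarith [hpy, hynear]
  linarith

lemma s6_frontier_mem (hcont : Continuous γ) (hper : ∀ u, γ (u + 2*π) = γ u) (hμ : S6Hyp γ)
    {p : EuclideanSpace ℝ (Fin 2)}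
    (hpc : p ∈ closure (convexHull ℝ (Set.range γ)))
    (hpi : p ∉ interior (convexHull ℝ (Set.range γ))) :
    p ∈ Set.range γ := by
  obtain ⟨v, hv, hsupp'⟩ := s6_support hμ hpi
  have hsupp : ∀ u, (inner ℝ v (γ u) : ℝ) ≤ inner ℝ v p := fun u =>
    hsupp' (γ u) (subset_closure (subset_convexHull ℝ _ ⟨u, rfl⟩))
  obtain ⟨m, hm, hmax⟩ := s6_max_exists hcont hper v
  have := s6_eq_max_pt hcont hper hμ hv hm hpc hsupp hmax
  exact ⟨m, this.symm⟩

lemma s6_notint (hcont : Continuous γ) (hper : ∀ u, γ (u + 2*π) = γ u) (hμ : S6Hyp γ)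
    (w : ℝ) : γ w ∉ interior (convexHull ℝ (Set.range γ)) := by
  intro hw
  classical
  have hlt : ∀ v : EuclideanSpace ℝ (Fin 2), ‖v‖ = 1 → ∀ mm : ℝ,
      (∀ u, (inner ℝ v (γ u) : ℝ) ≤ inner ℝ v (γ mm)) →
      (inner ℝ v (γ w) : ℝ) < inner ℝ v (γ mm) := by
    intro v hv mm hmm
    obtain ⟨r, hr, hball⟩ := Metric.isOpen_iff.mp isOpen_interior _ hw
    have hq : γ w + (r/2) • v ∈ convexHull ℝ (Set.range γ) := by
      apply interior_subset
      apply hball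
      rw [Metric.mem_ball, dist_eq_norm]
      have : γ w + (r/2) • v - γ w = (r/2) • v := by abel
      rw [this, norm_smul, Real.norm_eq_abs, hv, mul_one, abs_of_pos (by linarith)]
      linarith
    have hhalf : convexHull ℝ (Set.range γ) ⊆ {x | (inner ℝ v x : ℝ) ≤ inner ℝ v (γ mm)} :=
      convexHull_min (fun x ⟨u, hu⟩ => by rw [← hu]; exact hmm u)
        (convex_halfSpace_le (⟨fun a b => inner_add_right _ _ _,
          fun c a => real_inner_smul_right _ _ _⟩ : IsLinearMap ℝ
            (fun x => (inner ℝ v x : ℝ))) _)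
    have h1 : (inner ℝ v (γ w + (r/2) • v) : ℝ) ≤ inner ℝ v (γ mm) := hhalf hq
    rw [inner_add_right, real_inner_smul_right] at h1
    have h2 : (inner ℝ v v : ℝ) = 1 := by
      rw [real_inner_self_eq_norm_mul_norm, hv, mul_one]
    rw [h2, mul_one] at h1
    linarith
  have hQex : ∀ v : EuclideanSpace ℝ (Fin 2), ‖v‖ = 1 → ∃ x,
      x ∈ Ioo w (w + 2*π) ∧ ∀ u, (inner ℝ v (γ u) : ℝ) ≤ inner ℝ v (γ x) := by
    intro v hv
    obtain ⟨m, hm, hmax⟩ := s6_max_exists hcont hper v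
    obtain ⟨y, hy, k, hyk⟩ := s6_repr m w
    have hgy : γ m = γ y := by rw [hyk]; exact s6_gper hper k y
    have hymax : ∀ u, (inner ℝ v (γ u) : ℝ) ≤ inner ℝ v (γ y) := by
      intro u; rw [← hgy]; exact hmax u
    have hyw : y ≠ w := by
      intro h
      have := hlt v hv y hymax
      rw [h] at this
      exact lt_irrefl _ this
    exact ⟨y, ⟨lt_of_le_of_ne hy.1 (Ne.symm hyw), hy.2⟩, hymax⟩
  have hQuniq : ∀ v : EuclideanSpace ℝ (Fin 2), ‖v‖ = 1 → ∀ x y,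
      (x ∈ Ioo w (w + 2*π) ∧ ∀ u, (inner ℝ v (γ u) : ℝ) ≤ inner ℝ v (γ x)) →
      (y ∈ Ioo w (w + 2*π) ∧ ∀ u, (inner ℝ v (γ u) : ℝ) ≤ inner ℝ v (γ y)) → x = y := by
    intro v hv x y ⟨hxI, hxm⟩ ⟨hyI, hym⟩
    obtain ⟨x', hx', kx, hxk⟩ := s6_repr x 0
    obtain ⟨y', hy', ky, hyk⟩ := s6_repr y 0
    rw [zero_add] at hx' hy'
    have hgx : γ x = γ x' := by rw [hxk]; exact s6_gper hper kx x'
    have hgy : γ y = γ y' := by rw [hyk]; exact s6_gper hper ky y'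
    have hx'm : ∀ u, (inner ℝ v (γ u) : ℝ) ≤ inner ℝ v (γ x') := fun u => by
      rw [← hgx]; exact hxm u
    have hy'm : ∀ u, (inner ℝ v (γ u) : ℝ) ≤ inner ℝ v (γ y') := fun u => by
      rw [← hgy]; exact hym u
    have hxy' : x' = y' := s6_max_pt_eq hcont hper hμ hv hx' hy' hx'm hy'm
    have hk : kx = ky := by
      by_contra hne
      have h1 : (1:ℤ) ≤ |kx - ky| := Int.one_le_abs (sub_ne_zero.mpr hne)
      have h2 : (2*π:ℝ) ≤ |x - y| := by
        have hxy : x - y = 2*π*((kx:ℝ) - (ky:ℝ)) := by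
          rw [hxk, hyk, hxy']
          push_cast
          ring
        rw [hxy, abs_mul, abs_of_pos Real.two_pi_pos]
        have h1' : (1:ℝ) ≤ |((kx:ℝ) - (ky:ℝ))| := by
          have h1r : ((1:ℤ):ℝ) ≤ ((|kx - ky|:ℤ):ℝ) := Int.cast_le.mpr h1
          push_cast at h1r
          exact h1r
        nlinarith [Real.two_pi_pos]
      have h3 : |x - y| < 2*π := by
        rw [abs_lt]
        constructor <;> [linarith [hxI.1, hyI.2]; linarith [hxI.2, hyI.1]]
      linarith
    rw [hxk, hyk, hxy', hk]
  set Q : EuclideanSpace ℝ (Fin 2) → ℝ → Prop := fun v x =>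
    x ∈ Ioo w (w + 2*π) ∧ ∀ u, (inner ℝ v (γ u) : ℝ) ≤ inner ℝ v (γ x) with hQdef
  set W : EuclideanSpace ℝ (Fin 2) → ℝ := fun v =>
    if h : ∃ x, Q v x then Classical.choose h else 0 with hWdef
  have hWspec : ∀ v : EuclideanSpace ℝ (Fin 2), ‖v‖ = 1 → Q v (W v) := by
    intro v hv
    have hex : ∃ x, Q v x := hQex v hv
    simp only [hWdef, dif_pos hex]
    exact Classical.choose_spec hex
  set V : ℝ → EuclideanSpace ℝ (Fin 2) := fun θ =>
    (WithLp.equiv 2 (Fin 2 → ℝ)).symm ![Real.cos θ, Real.sin θ] with hVdef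
  have hVapp : ∀ θ (i : Fin 2), V θ i = ![Real.cos θ, Real.sin θ] i := fun θ i => rfl
  have hVnorm : ∀ θ, ‖V θ‖ = 1 := by
    intro θ
    rw [EuclideanSpace.norm_eq]
    have : ∑ i : Fin 2, ‖V θ i‖^2 = Real.cos θ ^ 2 + Real.sin θ ^ 2 := by
      rw [Fin.sum_univ_two]
      simp [hVapp, Real.norm_eq_abs, sq_abs]
    rw [this, Real.cos_sq_add_sin_sq, Real.sqrt_one]
  have hVcont : Continuous V := by
    have h1 : Continuous fun θ : ℝ => ![Real.cos θ, Real.sin θ] := by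
      apply continuous_pi
      intro i
      fin_cases i
      · simpa using Real.continuous_cos
      · simpa using Real.continuous_sin
    exact (PiLp.continuous_toLp 2 (fun _ : Fin 2 => ℝ)).comp h1
  have hVpi : ∀ θ, V (θ + π) = -(V θ) := by
    intro θ
    apply (WithLp.equiv 2 (Fin 2 → ℝ)).injective
    funext i
    fin_cases i <;>
      simp [hVdef, Real.cos_add, Real.sin_add]
  have hV2pi : ∀ θ, V (θ + 2*π) = V θ := by
    intro θ
    apply (WithLp.equiv 2 (Fin 2 → ℝ)).injective
    funext i
    fin_cases i <;>
      simp [hVdef, Real.cos_add, Real.sin_add]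
  set U : ℝ → ℝ := fun θ => W (V θ) with hUdef
  have hUQ : ∀ θ, Q (V θ) (U θ) := fun θ => hWspec (V θ) (hVnorm θ)
  have hUper : ∀ θ, U (θ + 2*π) = U θ := fun θ => congrArg W (hV2pi θ)
  have hUchar : ∀ θ (L : ℝ), L ∈ Icc w (w + 2*π) →
      (∀ u, (inner ℝ (V θ) (γ u) : ℝ) ≤ inner ℝ (V θ) (γ L)) → L = U θ := by
    intro θ L hL hLmax
    have hLw : L ≠ w := by
      intro h
      have := hlt (V θ) (hVnorm θ) L hLmax
      rw [h] at this
      exact lt_irrefl _ this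
    have hLw2 : L ≠ w + 2*π := by
      intro h
      have hgLw : γ L = γ w := by
        rw [h, show w + 2*π = w + 2*π*((1:ℤ):ℝ) by push_cast; ring]
        exact s6_gper hper 1 w
      have := hlt (V θ) (hVnorm θ) L hLmax
      rw [hgLw] at this
      exact lt_irrefl _ this
    exact hQuniq (V θ) (hVnorm θ) L (U θ)
      ⟨⟨lt_of_le_of_ne hL.1 (Ne.symm hLw), lt_of_le_of_ne hL.2 hLw2⟩, hLmax⟩ (hUQ θ)
  have hUcont : Continuous U := by
    rw [continuous_iff_seqContinuous]
    intro xs θ hxs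
    apply tendsto_of_subseq_tendsto
    intro ns hns
    have hmem : ∀ n, U (xs (ns n)) ∈ Icc w (w + 2*π) := fun n =>
      ⟨(hUQ (xs (ns n))).1.1.le, (hUQ (xs (ns n))).1.2.le⟩
    obtain ⟨L, hL, φ, hφ, hφt⟩ := isCompact_Icc.tendsto_subseq hmem
    refine ⟨φ, ?_⟩
    have hsub : Tendsto (fun n => xs (ns (φ n))) atTop (nhds θ) :=
      hxs.comp (hns.comp hφ.tendsto_atTop)
    have hVt : Tendsto (fun n => V (xs (ns (φ n)))) atTop (nhds (V θ)) :=
      (hVcont.tendsto θ).comp hsub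
    have hUt : Tendsto (fun n => U (xs (ns (φ n)))) atTop (nhds L) := hφt
    have hLmax : ∀ u, (inner ℝ (V θ) (γ u) : ℝ) ≤ inner ℝ (V θ) (γ L) := by
      intro u
      have h1 : Tendsto (fun n => (inner ℝ (V (xs (ns (φ n)))) (γ u) : ℝ)) atTop
          (nhds (inner ℝ (V θ) (γ u))) := hVt.inner tendsto_const_nhds
      have h2 : Tendsto (fun n => (inner ℝ (V (xs (ns (φ n)))) (γ (U (xs (ns (φ n))))) : ℝ)) atTop
          (nhds (inner ℝ (V θ) (γ L))) := hVt.inner ((hcont.tendsto L).comp hUt)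
      exact le_of_tendsto_of_tendsto' h1 h2 fun n => (hUQ (xs (ns (φ n)))).2 u
    have : L = U θ := hUchar θ L hL hLmax
    rw [← this]
    exact hUt
  set D : ℝ → ℝ := fun θ => U (θ + π) - U θ with hDdef
  have hDcont : Continuous D := (hUcont.comp (continuous_id.add continuous_const)).sub hUcont
  have hDne : ∀ θ, D θ ≠ 0 := by
    intro θ hD0
    have heq : U (θ + π) = U θ := sub_eq_zero.mp hD0
    have hmax1 := (hUQ θ).2
    have hmax2 := (hUQ (θ + π)).2
    rw [heq] at hmax2
    have hconst : ∀ u, (inner ℝ (V θ) (γ u) : ℝ) = inner ℝ (V θ) (γ (U θ)) := by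
      intro u
      refine le_antisymm (hmax1 u) ?_
      have := hmax2 u
      rw [hVpi θ] at this
      rw [inner_neg_left, inner_neg_left] at this
      linarith
    obtain ⟨u, hu⟩ := s6_nonconst hμ (hVnorm θ)
    apply hu
    rw [hconst u, hconst 0]
  have hDanti : ∀ θ, D (θ + π) = -(D θ) := by
    intro θ
    simp only [hDdef]
    rw [show θ + π + π = θ + 2*π by ring, hUper]
    ring
  have h0 : (0:ℝ) ∈ uIcc (D 0) (D π) := by
    have hπ : D π = -(D 0) := by
      have := hDanti 0
      rw [zero_add] at this
      exact this
    rw [Set.mem_uIcc]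
    rcases le_or_gt (D 0) 0 with h | h
    · left; exact ⟨h, by rw [hπ]; linarith⟩
    · right; exact ⟨by rw [hπ]; linarith, h.le⟩
  obtain ⟨θ₀, _, hθ₀⟩ := intermediate_value_uIcc (hDcont.continuousOn (s := uIcc 0 π)) h0
  exact hDne θ₀ hθ₀

end Statement6Aux

/-- A continuous closed plane curve such that every height function
`u ↦ v · γ(u)` (for unit `v`) has exactly one local maximum point on `S¹` is convex. -/
theorem statement6 (γ : ℝ → EuclideanSpace ℝ (Fin 2))
    (hcont : Continuous γ)
    (hper : ∀ u, γ (u + 2*Real.pi) = γ u)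
    (hμ : ∀ v : EuclideanSpace ℝ (Fin 2), ‖v‖ = 1 →
      ∃ u₀ ∈ Set.Ico (0:ℝ) (2*Real.pi),
        IsLocalMaxPt (fun u => (inner ℝ v (γ u) : ℝ)) u₀ ∧
        ∀ u ∈ Set.Ico (0:ℝ) (2*Real.pi),
          IsLocalMaxPt (fun u' => (inner ℝ v (γ u') : ℝ)) u → u = u₀) :
    IsConvexCurve γ := by
  have hμ' : S6Hyp γ := hμ
  constructor
  · -- SimpleOnPeriod
    intro s hs t ht heq
    have hpc : γ s ∈ closure (convexHull ℝ (Set.range γ)) :=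
      subset_closure (subset_convexHull ℝ _ ⟨s, rfl⟩)
    have hpi : γ s ∉ interior (convexHull ℝ (Set.range γ)) := s6_notint hcont hper hμ' s
    obtain ⟨v, hv, hsupp'⟩ := s6_support hμ' hpi
    have hsupp : ∀ u, (inner ℝ v (γ u) : ℝ) ≤ inner ℝ v (γ s) := fun u =>
      hsupp' (γ u) (subset_closure (subset_convexHull ℝ _ ⟨u, rfl⟩))
    have hsuppt : ∀ u, (inner ℝ v (γ u) : ℝ) ≤ inner ℝ v (γ t) := fun u => by
      rw [← heq]; exact hsupp u
    exact s6_max_pt_eq hcont hper hμ' hv hs ht hsupp hsuppt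
  · -- range = frontier of convex hull
    have hfr : frontier (convexHull ℝ (Set.range γ))
        = closure (convexHull ℝ (Set.range γ)) \ interior (convexHull ℝ (Set.range γ)) := rfl
    apply Set.Subset.antisymm
    · rintro x ⟨u, rfl⟩
      rw [hfr]
      exact ⟨subset_closure (subset_convexHull ℝ _ ⟨u, rfl⟩), s6_notint hcont hper hμ' u⟩
    · intro p hp
      rw [hfr] at hp
      exact s6_frontier_mem hcont hper hμ' hp.1 hp.2
end

section
/- Let γ : S¹ → ℝⁿ be a smooth immersed closed curve with no vertical tangent lines, parametrized by its arc-length s, and let γ̄ := P_xy ∘ γ be its projection curve, with arc-length parameter s̄ and c := |x_s|² + |y_s|² = |dγ̄/ds|² > 0 (here (x,y) = γ̄). Then P_xy(γ_ss) = c · γ̄_{s̄s̄} + (1/2) c_{s̄} · γ̄_{s̄}, and consequently P_xy(γ_ss) · γ̄_{s̄s̄} = c · k̄², where k̄ := |γ̄_{s̄s̄}| is the curvature of γ̄. -/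
open Set

noncomputable def PxyL (n : ℕ) (hn : 2 ≤ n) :
    EuclideanSpace ℝ (Fin n) →L[ℝ] EuclideanSpace ℝ (Fin 2) :=
  LinearMap.toContinuousLinearMap
  { toFun := fun x => WithLp.toLp 2 (fun i : Fin 2 => x ⟨(i : ℕ), lt_of_lt_of_le i.isLt hn⟩)
    map_add' := fun _ _ => rfl
    map_smul' := fun _ _ => rfl }

lemma Pxy_eq {n : ℕ} (hn : 2 ≤ n) (x : EuclideanSpace ℝ (Fin n)) :
    Pxy x = PxyL n hn x := by
  ext i
  have h : (i : ℕ) < n := lt_of_lt_of_le i.isLt hn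
  simp [Pxy, PxyL, h, LinearMap.toContinuousLinearMap]
  rfl

/-- For an arc-length parametrized smooth immersed closed curve with no
vertical tangent lines, `P_xy(γ_ss) = c γ̄_s̄s̄ + (1/2) c_s̄ γ̄_s̄` where `c = x_s² + y_s²`,
and consequently `P_xy(γ_ss) · γ̄_s̄s̄ = c k̄²`. -/
theorem statement8 {n : ℕ} (hn : 2 ≤ n)
    (γ : ℝ → EuclideanSpace ℝ (Fin n))
    (hsm : ContDiff ℝ (⊤ : ℕ∞) γ)
    (hper : ∀ u, γ (u + 2*Real.pi) = γ u)
    (himm : ∀ u, deriv γ u ≠ 0)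
    (harc : ∀ u, ‖deriv γ u‖ = 1)
    (hvert : ∀ u, Pxy (deriv γ u) ≠ 0) :
    ∀ u : ℝ,
      Pxy (aderiv γ (aderiv γ γ) u)
        = (‖aderiv γ (fun w => Pxy (γ w)) u‖^2) •
            aderiv (fun w => Pxy (γ w))
              (aderiv (fun w => Pxy (γ w)) (fun w => Pxy (γ w))) u
          + ((1/2) * aderiv (fun w => Pxy (γ w))
                (fun w => ‖aderiv γ (fun z => Pxy (γ z)) w‖^2) u) •
              aderiv (fun w => Pxy (γ w)) (fun w => Pxy (γ w)) u
      ∧ (inner ℝ (Pxy (aderiv γ (aderiv γ γ) u))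
            (aderiv (fun w => Pxy (γ w))
              (aderiv (fun w => Pxy (γ w)) (fun w => Pxy (γ w))) u) : ℝ)
          = ‖aderiv γ (fun w => Pxy (γ w)) u‖^2 *
              ‖aderiv (fun w => Pxy (γ w))
                (aderiv (fun w => Pxy (γ w)) (fun w => Pxy (γ w))) u‖^2 := by
  have hP : ∀ x : EuclideanSpace ℝ (Fin n), Pxy x = PxyL n hn x := Pxy_eq hn
  set P := PxyL n hn with hPdef
  intro u
  simp only [hP]
  have hγd : Differentiable ℝ γ := hsm.differentiable (by simp)
  have hsm' : ContDiff ℝ ((⊤:ℕ∞):WithTop ℕ∞) γ := hsm.of_le (by simp)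
  have hdγ : Differentiable ℝ (deriv γ) :=
    ((contDiff_infty_iff_deriv.mp hsm').2).differentiable (by simp)
  set g : ℝ → EuclideanSpace ℝ (Fin 2) := fun v => P (deriv γ v) with hgdef
  have hbar : ∀ v, deriv (fun w => P (γ w)) v = g v := fun v =>
    (P.hasFDerivAt.comp_hasDerivAt v (hγd v).hasDerivAt).deriv
  have hgd : ∀ v, HasDerivAt g (P (deriv (deriv γ) v)) v := fun v =>
    P.hasFDerivAt.comp_hasDerivAt v (hdγ v).hasDerivAt
  have hgne : ∀ v, g v ≠ 0 := fun v => by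
    have h := hvert v; rw [hP] at h; exact h
  set r : ℝ → ℝ := fun v => ‖g v‖ with hrdef
  have hrne : ∀ v, r v ≠ 0 := fun v => norm_ne_zero_iff.mpr (hgne v)
  have hrd : ∀ v, DifferentiableAt ℝ r v := fun v =>
    ((hgd v).differentiableAt).norm ℝ (hgne v)
  have einv : ∀ v, ‖deriv γ v‖⁻¹ = 1 := fun v => by rw [harc v, inv_one]
  set r' := deriv r u with hr'def
  have hru : HasDerivAt r r' u := (hrd u).hasDerivAt
  set g' := P (deriv (deriv γ) u) with hg'def
  -- LHS
  have eγγ : aderiv γ γ = deriv γ := by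
    funext v; simp [aderiv, einv v]
  have eL : P (aderiv γ (aderiv γ γ) u) = g' := by
    rw [eγγ]; simp [aderiv, einv u, hg'def]
  -- tangent function
  have eT : aderiv (fun w => P (γ w)) (fun w => P (γ w)) = fun v => (r v)⁻¹ • g v := by
    funext v; simp only [aderiv, hbar v]; rfl
  have eTu : aderiv (fun w => P (γ w)) (fun w => P (γ w)) u = (r u)⁻¹ • g u := by
    rw [eT]
  have ec : (fun w => ‖aderiv γ (fun z => P (γ z)) w‖^2) = fun w => (r w)^2 := by
    funext w; simp only [aderiv, einv w, hbar w, one_smul]; rfl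
  have ecu : ‖aderiv γ (fun w => P (γ w)) u‖^2 = (r u)^2 := congrFun ec u
  have hTd : HasDerivAt (fun v => (r v)⁻¹ • g v)
      ((r u)⁻¹ • P (deriv (deriv γ) u) + (-r' / (r u)^2) • g u) u :=
    (hru.inv (hrne u)).smul (hgd u)
  have hA : aderiv (fun w => P (γ w)) (aderiv (fun w => P (γ w)) (fun w => P (γ w))) u
      = (r u)⁻¹ • ((r u)⁻¹ • g' + (-r' / (r u)^2) • g u) := by
    rw [eT]; simp only [aderiv, hbar u, hTd.deriv, hg'def]; rfl
  have hcd : HasDerivAt (fun w => (r w)^2) (2 * r u * r') u := by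
    have h := hru.fun_pow 2
    simpa [pow_one, mul_comm, mul_assoc, mul_left_comm] using h
  have hcs : aderiv (fun w => P (γ w)) (fun w => ‖aderiv γ (fun z => P (γ z)) w‖^2) u
      = (r u)⁻¹ * (2 * r u * r') := by
    rw [ec]; simp only [aderiv, hbar u, hcd.deriv, smul_eq_mul]; rfl
  have h0 : r u ≠ 0 := hrne u
  have hgu_inner : (inner ℝ (g u) (g u) : ℝ) = (r u)^2 := real_inner_self_eq_norm_sq _
  have hip : (inner ℝ (g u) g' : ℝ) = r u * r' := by
    have hinner1 : HasDerivAt (fun v => (inner ℝ (g v) (g v) : ℝ)) (2 * r u * r') u := by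
      have hfe : (fun v => (inner ℝ (g v) (g v) : ℝ)) = fun v => (r v)^2 := by
        funext v; exact real_inner_self_eq_norm_sq _
      rw [hfe]; exact hcd
    have hinner2 : HasDerivAt (fun v => (inner ℝ (g v) (g v) : ℝ))
        ((inner ℝ (g u) g' : ℝ) + (inner ℝ g' (g u) : ℝ)) u := (hgd u).inner ℝ (hgd u)
    have h := hinner1.unique hinner2
    have hsymm : (inner ℝ g' (g u) : ℝ) = (inner ℝ (g u) g' : ℝ) := real_inner_comm _ _
    rw [hsymm] at h
    linarith
  constructor
  · rw [eL, ecu, hA, hcs, eTu]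
    match_scalars <;> field_simp <;> ring
  · have hAn : ‖(r u)⁻¹ • ((r u)⁻¹ • g' + (-r' / (r u)^2) • g u)‖ ^ 2
        = (inner ℝ ((r u)⁻¹ • ((r u)⁻¹ • g' + (-r' / (r u)^2) • g u))
            ((r u)⁻¹ • ((r u)⁻¹ • g' + (-r' / (r u)^2) • g u)) : ℝ) :=
      (real_inner_self_eq_norm_sq _).symm
    rw [eL, ecu, hA, hAn]
    simp only [inner_add_left, inner_add_right, real_inner_smul_left, real_inner_smul_right]
    have hsym : (inner ℝ g' (g u) : ℝ) = r u * r' := by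
      rw [real_inner_comm]; exact hip
    rw [hsym, hip, hgu_inner]
    field_simp
    ring
end

section
/- Let γ : S¹ → ℝ³ be a smooth immersed closed curve satisfying the three-point condition with constant Δ ∈ [0,∞). Then every secant line of γ (a line passing through two distinct points of the image of γ) has slope at most Δ, and every tangent line of γ has slope at most Δ. -/
open Set

section AuxStatement13
open Filter Topology

local notation "E3" => EuclideanSpace ℝ (Fin 3)

lemma span_singleton_finrank_le (x : E3) : Module.finrank ℝ (ℝ ∙ x) ≤ 1 := by
  rcases eq_or_ne x 0 with h | h
  · rw [h, Submodule.span_zero_singleton]; simp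
  · rw [finrank_span_singleton h]

lemma exists_orth (v p : E3) :
    ∃ m : E3, m ≠ 0 ∧ (inner ℝ m v : ℝ) = 0 ∧ (inner ℝ m p : ℝ) = 0 := by
  set K : Submodule ℝ E3 := (ℝ ∙ v) ⊔ (ℝ ∙ p) with hK
  have hfin : Module.finrank ℝ K ≤ 2 := by
    refine (Submodule.finrank_add_le_finrank_add_finrank _ _).trans ?_
    have h1 := span_singleton_finrank_le v
    have h2 := span_singleton_finrank_le p
    omega
  have horth : Module.finrank ℝ K + Module.finrank ℝ Kᗮ = 3 := by
    rw [K.finrank_add_finrank_orthogonal]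
    simp [finrank_euclideanSpace_fin]
  have hne : Kᗮ ≠ ⊥ := by
    intro h
    rw [h] at horth
    simp [finrank_bot] at horth
    omega
  obtain ⟨m, hmK, hm0⟩ := Submodule.ne_bot_iff _ |>.mp hne
  refine ⟨m, hm0, ?_, ?_⟩
  · rw [real_inner_comm]
    exact hmK v (Submodule.mem_sup_left (Submodule.mem_span_singleton_self v))
  · rw [real_inner_comm]
    exact hmK p (Submodule.mem_sup_right (Submodule.mem_span_singleton_self p))

lemma hkey_lemma (v m : E3) (Δ : ℝ)
    (hcon : Δ * Real.sqrt ((v 0)^2 + (v 1)^2) < |v 2|)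
    (hm0 : m ≠ 0) (hmv : (inner ℝ m v : ℝ) = 0)
    (hslope : Real.sqrt ((m 0)^2 + (m 1)^2) ≤ Δ * |m 2|) : False := by
  have hinner : m 0 * v 0 + m 1 * v 1 + m 2 * v 2 = 0 := by
    rw [PiLp.inner_apply] at hmv
    simp [Fin.sum_univ_three, RCLike.inner_apply, conj_trivial] at hmv
    linarith
  set A := Real.sqrt ((m 0)^2 + (m 1)^2) with hA
  set B := Real.sqrt ((v 0)^2 + (v 1)^2) with hB
  have hA2 : A^2 = (m 0)^2 + (m 1)^2 := Real.sq_sqrt (by positivity)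
  have hB2 : B^2 = (v 0)^2 + (v 1)^2 := Real.sq_sqrt (by positivity)
  have hA0 : 0 ≤ A := Real.sqrt_nonneg _
  have hB0 : 0 ≤ B := Real.sqrt_nonneg _
  by_cases h2 : m 2 = 0
  · rw [h2] at hslope
    simp only [abs_zero, mul_zero] at hslope
    have hAz : A = 0 := le_antisymm hslope hA0
    have hsum : (m 0)^2 + (m 1)^2 = 0 := by rw [← hA2, hAz]; ring
    have h0 : m 0 = 0 := by nlinarith [sq_nonneg (m 0), sq_nonneg (m 1)]
    have h1 : m 1 = 0 := by nlinarith [sq_nonneg (m 0), sq_nonneg (m 1)]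
    apply hm0
    apply PiLp.ext
    intro i
    fin_cases i
    · exact h0
    · exact h1
    · exact h2
  · have habs : |m 2| * |v 2| ≤ A * B := by
      have hsq : (m 0 * v 0 + m 1 * v 1)^2 ≤ (A*B)^2 := by
        have h := sq_nonneg (m 0 * v 1 - m 1 * v 0)
        nlinarith [hA2, hB2]
      calc |m 2| * |v 2| = |m 2 * v 2| := (abs_mul _ _).symm
        _ = |m 0 * v 0 + m 1 * v 1| := by
            rw [show m 2 * v 2 = -(m 0 * v 0 + m 1 * v 1) by linarith, abs_neg]
        _ = Real.sqrt ((m 0 * v 0 + m 1 * v 1)^2) := (Real.sqrt_sq_eq_abs _).symm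
        _ ≤ Real.sqrt ((A*B)^2) := Real.sqrt_le_sqrt hsq
        _ = A*B := Real.sqrt_sq (mul_nonneg hA0 hB0)
    have h2' : 0 < |m 2| := abs_pos.mpr h2
    have hfin : |m 2| * |v 2| ≤ |m 2| * (Δ * B) := by
      calc |m 2| * |v 2| ≤ A * B := habs
        _ ≤ (Δ * |m 2|) * B := mul_le_mul_of_nonneg_right hslope hB0
        _ = |m 2| * (Δ * B) := by ring
    have : |v 2| ≤ Δ * B := le_of_mul_le_mul_left hfin h2'
    linarith

lemma secant_slope (γ : ℝ → E3)
    (hper : ∀ u, γ (u + 2*Real.pi) = γ u)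
    (Δ : ℝ) (h3pt : ThreePointCond γ Δ) :
    ∀ u₁ u₂ : ℝ, γ u₁ ≠ γ u₂ →
      |γ u₁ 2 - γ u₂ 2| ≤ Δ * Real.sqrt ((γ u₁ 0 - γ u₂ 0)^2 + (γ u₁ 1 - γ u₂ 1)^2) := by
  intro u₁ u₂ hne
  by_contra hcon
  push_neg at hcon
  have hperiodic : Function.Periodic γ (2*Real.pi) := hper
  have hπ : (0:ℝ) < 2*Real.pi := by positivity
  obtain ⟨a, ha, hga⟩ := hperiodic.exists_mem_Ico₀ hπ u₁
  obtain ⟨b, hb, hgb⟩ := hperiodic.exists_mem_Ico₀ hπ u₂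
  set v : E3 := γ u₁ - γ u₂ with hv
  have hvc : ∀ j : Fin 3, v j = γ u₁ j - γ u₂ j := fun j => rfl
  have hcon' : Δ * Real.sqrt ((v 0)^2 + (v 1)^2) < |v 2| := by
    rw [hvc 0, hvc 1, hvc 2]; exact hcon
  by_cases hall : ∀ w ∈ Set.Ico (0:ℝ) (2*Real.pi), γ w - γ u₁ ∈ (ℝ ∙ v)
  · obtain ⟨m, hm0, hmv, -⟩ := exists_orth v v
    refine hkey_lemma v m Δ hcon' hm0 hmv ?_
    refine h3pt m (inner ℝ m (γ u₁)) hm0 ?_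
    have hS : {u ∈ Set.Ico (0:ℝ) (2*Real.pi) | (inner ℝ m (γ u) : ℝ) = inner ℝ m (γ u₁)}
        = Set.Ico (0:ℝ) (2*Real.pi) := by
      apply Set.eq_of_subset_of_subset (fun w hw => hw.1)
      intro w hw
      refine ⟨hw, ?_⟩
      obtain ⟨c, hc⟩ := Submodule.mem_span_singleton.mp (hall w hw)
      have : (inner ℝ m (γ w - γ u₁) : ℝ) = 0 := by
        rw [← hc, real_inner_smul_right, hmv, mul_zero]
      rw [inner_sub_right] at this
      linarith
    rw [hS, (Set.Ico_infinite hπ).encard_eq]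
    exact le_top
  · push_neg at hall
    obtain ⟨w, hw, hwp⟩ := hall
    obtain ⟨m, hm0, hmv, hmp⟩ := exists_orth v (γ w - γ u₁)
    refine hkey_lemma v m Δ hcon' hm0 hmv ?_
    refine h3pt m (inner ℝ m (γ u₁)) hm0 ?_
    have hab : a ≠ b := by
      intro h
      exact hne (by rw [hga, hgb, h])
    have hwa : w ≠ a := by
      intro h
      apply hwp
      rw [h, ← hga, sub_self]
      exact Submodule.zero_mem _
    have hwb : w ≠ b := by
      intro h
      apply hwp
      rw [h, ← hgb]
      have : γ u₂ - γ u₁ = -v := by rw [hv]; abel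
      rw [this]
      exact Submodule.neg_mem _ (Submodule.mem_span_singleton_self v)
    have hsub : ({a, b, w} : Set ℝ) ⊆
        {u ∈ Set.Ico (0:ℝ) (2*Real.pi) | (inner ℝ m (γ u) : ℝ) = inner ℝ m (γ u₁)} := by
      rintro x (rfl | rfl | rfl)
      · exact ⟨ha, by rw [← hga]⟩
      · refine ⟨hb, ?_⟩
        have : (inner ℝ m v : ℝ) = inner ℝ m (γ u₁) - inner ℝ m (γ u₂) := by
          rw [hv, inner_sub_right]
        rw [← hgb]
        linarith [hmv, this]
      · refine ⟨hw, ?_⟩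
        rw [inner_sub_right] at hmp
        linarith
    have hcard : ({a, b, w} : Set ℝ).encard = 3 := by
      rw [Set.encard_insert_of_notMem (by simp [hab, hwa.symm]),
        Set.encard_pair hwb.symm]
      rfl
    calc (3 : ℕ∞) = ({a, b, w} : Set ℝ).encard := hcard.symm
      _ ≤ _ := Set.encard_mono hsub


lemma tangent_slope (γ : ℝ → E3)
    (hsm : ContDiff ℝ (⊤ : ℕ∞) γ)
    (himm : ∀ u, deriv γ u ≠ 0)
    (Δ : ℝ)
    (hsec : ∀ u₁ u₂ : ℝ, γ u₁ ≠ γ u₂ →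
      |γ u₁ 2 - γ u₂ 2| ≤ Δ * Real.sqrt ((γ u₁ 0 - γ u₂ 0)^2 + (γ u₁ 1 - γ u₂ 1)^2)) :
    ∀ u : ℝ, |deriv γ u 2| ≤ Δ * Real.sqrt ((deriv γ u 0)^2 + (deriv γ u 1)^2) := by
  intro u
  set v := deriv γ u with hvdef
  have hd : HasDerivAt γ v u := ((hsm.differentiable (by simp)) u).hasDerivAt
  have htends : Tendsto (slope γ u) (𝓝[≠] u) (𝓝 v) := hasDerivAt_iff_tendsto_slope.mp hd
  obtain ⟨i, hi⟩ : ∃ i, v i ≠ 0 := by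
    by_contra h
    push_neg at h
    exact himm u (PiLp.ext h)
  have hg : HasDerivAt (fun y => γ y i) (v i) u := by
    have := (EuclideanSpace.proj (𝕜 := ℝ) i).hasFDerivAt.comp_hasDerivAt u hd
    exact this
  have hslope_ne : ∀ᶠ y in 𝓝[≠] u, γ y ≠ γ u := by
    have h1 : Tendsto (slope (fun y => γ y i) u) (𝓝[≠] u) (𝓝 (v i)) :=
      hasDerivAt_iff_tendsto_slope.mp hg
    filter_upwards [h1.eventually_ne hi] with y hy heq
    apply hy
    rw [slope_def_field, heq]
    simp
  have hineq : ∀ᶠ y in 𝓝[≠] u,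
      0 ≤ Δ * Real.sqrt ((slope γ u y 0)^2 + (slope γ u y 1)^2) - |slope γ u y 2| := by
    filter_upwards [hslope_ne, self_mem_nhdsWithin] with y hy hyu
    have hyu' : y - u ≠ 0 := sub_ne_zero.mpr hyu
    have hsec' := hsec y u hy
    have hcomp : ∀ j : Fin 3, slope γ u y j = (y - u)⁻¹ * (γ y j - γ u j) := by
      intro j
      show ((y - u)⁻¹ • (γ y -ᵥ γ u)) j = _
      simp [PiLp.smul_apply, PiLp.sub_apply]
    rw [hcomp 0, hcomp 1, hcomp 2]
    have hk : (0:ℝ) ≤ |y - u|⁻¹ := by positivity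
    have hsq : ((y - u)⁻¹ * (γ y 0 - γ u 0))^2 + ((y - u)⁻¹ * (γ y 1 - γ u 1))^2
        = ((y-u)⁻¹)^2 * ((γ y 0 - γ u 0)^2 + (γ y 1 - γ u 1)^2) := by ring
    rw [hsq, Real.sqrt_mul (sq_nonneg _), Real.sqrt_sq_eq_abs, abs_inv, abs_mul, abs_inv]
    have := mul_le_mul_of_nonneg_left hsec' hk
    linarith [this]
  have hcont : ContinuousAt
      (fun w : E3 => Δ * Real.sqrt ((w 0)^2 + (w 1)^2) - |w 2|) v := by
    have h0 : Continuous fun w : E3 => w 0 := (EuclideanSpace.proj (𝕜 := ℝ) (0 : Fin 3)).continuous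
    have h1 : Continuous fun w : E3 => w 1 := (EuclideanSpace.proj (𝕜 := ℝ) (1 : Fin 3)).continuous
    have h2 : Continuous fun w : E3 => w 2 := (EuclideanSpace.proj (𝕜 := ℝ) (2 : Fin 3)).continuous
    exact Continuous.continuousAt (by continuity)
  have hlim : Tendsto (fun y => Δ * Real.sqrt ((slope γ u y 0)^2 + (slope γ u y 1)^2)
      - |slope γ u y 2|) (𝓝[≠] u)
      (𝓝 (Δ * Real.sqrt ((v 0)^2 + (v 1)^2) - |v 2|)) := hcont.tendsto.comp htends
  have hfinal : 0 ≤ Δ * Real.sqrt ((v 0)^2 + (v 1)^2) - |v 2| :=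
    ge_of_tendsto hlim hineq
  linarith

end AuxStatement13

/-- If a smooth immersed closed curve in `ℝ³` satisfies the three-point
condition with constant `Δ`, then all its secant lines and all its tangent lines have slope
at most `Δ`. -/
theorem statement13
    (γ : ℝ → EuclideanSpace ℝ (Fin 3))
    (hsm : ContDiff ℝ (⊤ : ℕ∞) γ)
    (hper : ∀ u, γ (u + 2*Real.pi) = γ u)
    (himm : ∀ u, deriv γ u ≠ 0)
    (Δ : ℝ) (hΔ : 0 ≤ Δ)
    (h3pt : ThreePointCond γ Δ) :
    (∀ u₁ u₂ : ℝ, γ u₁ ≠ γ u₂ →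
      |γ u₁ 2 - γ u₂ 2| ≤ Δ * Real.sqrt ((γ u₁ 0 - γ u₂ 0)^2 + (γ u₁ 1 - γ u₂ 1)^2))
    ∧ (∀ u : ℝ, |deriv γ u 2| ≤ Δ * Real.sqrt ((deriv γ u 0)^2 + (deriv γ u 1)^2)) := by
  have hsec := secant_slope γ hper Δ h3pt
  exact ⟨hsec, tangent_slope γ hsm himm Δ hsec⟩
end

section
/- Let γ : S¹ → ℝ³ be a smooth immersed closed curve such that (i) every vertical affine plane P ⊂ ℝ³ satisfies #{u ∈ S¹ : γ(u) ∈ P} ≤ 2, and (ii) there exists Δ ∈ [0,∞) such that every tangent line of γ has slope at most Δ. Then there exists Δ′ ∈ [0,∞) such that every secant line of γ (a line passing through two distinct points of the image of γ) has slope at most Δ′. -/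
open Set

private lemma cs2' (a b c d : ℝ) :
    a*b + c*d ≤ Real.sqrt (a^2+c^2) * Real.sqrt (b^2+d^2) := by
  rw [← Real.sqrt_mul (by positivity)]
  calc a*b + c*d ≤ |a*b + c*d| := le_abs_self _
    _ = Real.sqrt ((a*b+c*d)^2) := (Real.sqrt_sq_eq_abs _).symm
    _ ≤ Real.sqrt ((a^2+c^2)*(b^2+d^2)) := by
        apply Real.sqrt_le_sqrt; nlinarith [sq_nonneg (a*d - c*b)]


set_option maxHeartbeats 4000000 in
/-- If every vertical plane meets a smooth immersed closed curve in `ℝ³` in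
at most two points, and all tangent slopes are bounded by some `Δ ∈ [0,∞)`, then all secant
slopes are bounded by some `Δ′ ∈ [0,∞)`. -/
theorem statement14
    (γ : ℝ → EuclideanSpace ℝ (Fin 3))
    (hsm : ContDiff ℝ (⊤ : ℕ∞) γ)
    (hper : ∀ u, γ (u + 2*Real.pi) = γ u)
    (himm : ∀ u, deriv γ u ≠ 0)
    (hvplane : ∀ (m : EuclideanSpace ℝ (Fin 3)) (d : ℝ), m ≠ 0 → m 2 = 0 →
      ({u ∈ Set.Ico (0:ℝ) (2*Real.pi) | (inner ℝ m (γ u) : ℝ) = d}).encard ≤ 2)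
    (Δ : ℝ) (hΔ : 0 ≤ Δ)
    (htan : ∀ u : ℝ, |deriv γ u 2| ≤ Δ * Real.sqrt ((deriv γ u 0)^2 + (deriv γ u 1)^2)) :
    ∃ Δ' : ℝ, 0 ≤ Δ' ∧ ∀ u₁ u₂ : ℝ, γ u₁ ≠ γ u₂ →
      |γ u₁ 2 - γ u₂ 2| ≤ Δ' * Real.sqrt ((γ u₁ 0 - γ u₂ 0)^2 + (γ u₁ 1 - γ u₂ 1)^2) := by
  have pi2 : (0:ℝ) < 2*Real.pi := Real.two_pi_pos
  have hd : Differentiable ℝ γ := hsm.differentiable (by simp)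
  have hX : ∀ (i : Fin 3) (u : ℝ), HasDerivAt (fun v => γ v i) (deriv γ u i) u := by
    intro i u
    have h := (EuclideanSpace.proj (𝕜 := ℝ) i).hasFDerivAt.comp_hasDerivAt u (hd u).hasDerivAt
    exact h
  have hXc : ∀ i : Fin 3, Continuous (fun u => γ u i) := fun i =>
    ((EuclideanSpace.proj (𝕜 := ℝ) i).continuous).comp hsm.continuous
  have hdc : ∀ i : Fin 3, Continuous (fun u => deriv γ u i) := fun i =>
    ((EuclideanSpace.proj (𝕜 := ℝ) i).continuous).comp (hsm.continuous_deriv (by simp))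
  have hP : Function.Periodic γ (2*Real.pi) := hper
  have hPd : Function.Periodic (deriv γ) (2*Real.pi) := by
    intro u
    have h2 : (fun v => γ (v + 2*Real.pi)) = γ := funext hper
    calc deriv γ (u + 2*Real.pi) = deriv (fun v => γ (v + 2*Real.pi)) u := by
          rw [deriv_comp_add_const]
      _ = deriv γ u := by rw [h2]
  -- reduction to a period
  have hred : ∀ u : ℝ, ∃ w ∈ Set.Ico (0:ℝ) (2*Real.pi), γ w = γ u ∧ deriv γ w = deriv γ u
      ∧ ∃ n : ℤ, u - w = n * (2*Real.pi) := by
    intro u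
    refine ⟨toIcoMod pi2 0 u, by simpa using toIcoMod_mem_Ico' pi2 u, ?_, ?_, ?_⟩
    · rw [toIcoMod]; exact hP.sub_zsmul_eq _
    · rw [toIcoMod]; exact hPd.sub_zsmul_eq _
    · exact ⟨toIcoDiv pi2 0 u, by rw [toIcoMod]; push_cast [zsmul_eq_mul]; ring⟩
  -- horizontal speed
  set ρ : ℝ → ℝ := fun u => Real.sqrt ((deriv γ u 0)^2 + (deriv γ u 1)^2) with hρdef
  have hρc : Continuous ρ := by
    apply Real.continuous_sqrt.comp; exact ((hdc 0).pow 2).add ((hdc 1).pow 2)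
  have hρpos : ∀ u, 0 < ρ u := by
    intro u
    rw [hρdef]
    rw [Real.sqrt_pos]
    by_contra h
    push_neg at h
    have h0 : deriv γ u 0 = 0 ∧ deriv γ u 1 = 0 := by constructor <;> nlinarith [sq_nonneg (deriv γ u 0), sq_nonneg (deriv γ u 1)]
    have h2 : deriv γ u 2 = 0 := by
      have := htan u
      rw [h0.1, h0.2] at this
      simp at this
      have : |deriv γ u 2| ≤ 0 := by simpa using this
      simpa [abs_nonpos_iff] using this
    apply himm u
    ext i
    fin_cases i <;> simp [h0.1, h0.2, h2]
  -- min and max of ρ, and bound on |z'|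
  obtain ⟨v₀, hv₀, hminρ⟩ := (isCompact_Icc (a := (0:ℝ)) (b := 2*Real.pi)).exists_isMinOn
    ⟨0, Set.mem_Icc.2 ⟨le_refl 0, by linarith⟩⟩ hρc.continuousOn
  obtain ⟨v₁, hv₁, hmaxρ⟩ := (isCompact_Icc (a := (0:ℝ)) (b := 2*Real.pi)).exists_isMaxOn
    ⟨0, Set.mem_Icc.2 ⟨le_refl 0, by linarith⟩⟩ hρc.continuousOn
  rw [isMinOn_iff] at hminρ
  rw [isMaxOn_iff] at hmaxρ
  set ρ₀ := ρ v₀ with hρ₀def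
  set R := ρ v₁ with hRdef
  have hρ₀pos : 0 < ρ₀ := hρpos v₀
  have hρglob : ∀ u, ρ₀ ≤ ρ u ∧ ρ u ≤ R := by
    intro u
    obtain ⟨w, hw, -, hdw, -⟩ := hred u
    have hρeq : ρ w = ρ u := by rw [hρdef]; simp [hdw]
    have hwIcc : w ∈ Set.Icc (0:ℝ) (2*Real.pi) := Set.Ico_subset_Icc_self hw
    exact ⟨hρeq ▸ hminρ w hwIcc, hρeq ▸ hmaxρ w hwIcc⟩
  have hRpos : 0 < R := lt_of_lt_of_le hρ₀pos (by linarith [hρglob v₀])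
  -- z' globally bounded, hence z Lipschitz
  have hz2 : ∀ u, |deriv γ u 2| ≤ Δ * R := by
    intro u
    calc |deriv γ u 2| ≤ Δ * ρ u := htan u
      _ ≤ Δ * R := by
        have := (hρglob u).2; nlinarith
  have hzLip : ∀ a b : ℝ, |γ a 2 - γ b 2| ≤ (Δ * R) * |a - b| := by
    intro a b
    have := Convex.norm_image_sub_le_of_norm_deriv_le (𝕜 := ℝ) (f := fun u => γ u 2)
      (s := Set.univ) (C := Δ * R)
      (fun x _ => (hX 2 x).differentiableAt)
      (fun x _ => by rw [(hX 2 x).deriv]; simpa [Real.norm_eq_abs] using hz2 x)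
      (hs := convex_univ) (Set.mem_univ b) (Set.mem_univ a)
    simpa [Real.norm_eq_abs] using this
  -- the horizontal projection is injective on a period
  have hproj : ∀ u ∈ Set.Ico (0:ℝ) (2*Real.pi), ∀ v ∈ Set.Ico (0:ℝ) (2*Real.pi),
      u ≠ v → ¬(γ u 0 = γ v 0 ∧ γ u 1 = γ v 1) := by
    intro u hu v hv huv hxy
    obtain ⟨hx0, hx1⟩ := hxy
    have hw : ∃ w ∈ Set.Ico (0:ℝ) (2*Real.pi), ¬(γ w 0 = γ u 0 ∧ γ w 1 = γ u 1) := by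
      by_contra h
      push_neg at h
      have hc : ∀ t : ℝ, γ t 0 = γ u 0 ∧ γ t 1 = γ u 1 := by
        intro t
        obtain ⟨w, hwI, hγw, -, -⟩ := hred t
        rw [← hγw]; exact h w hwI
      have hd0 : deriv γ u 0 = 0 := by
        have he : (fun v : ℝ => γ v 0) = fun _ => γ u 0 := funext fun t => (hc t).1
        have h1 := hX 0 u
        rw [he] at h1
        exact h1.unique (hasDerivAt_const u _)
      have hd1 : deriv γ u 1 = 0 := by
        have he : (fun v : ℝ => γ v 1) = fun _ => γ u 1 := funext fun t => (hc t).2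
        have h1 := hX 1 u
        rw [he] at h1
        exact h1.unique (hasDerivAt_const u _)
      have := hρpos u
      rw [hρdef] at this
      simp [hd0, hd1] at this
    obtain ⟨w, hwI, hwp⟩ := hw
    set a := -(γ w 1 - γ u 1) with hadef
    set b := γ w 0 - γ u 0 with hbdef
    set m : EuclideanSpace ℝ (Fin 3) := (WithLp.equiv 2 (Fin 3 → ℝ)).symm ![a, b, 0] with hmdef
    have hinner : ∀ t, (inner ℝ m (γ t) : ℝ) = a * γ t 0 + b * γ t 1 := by
      intro t; rw [hmdef]; simp [PiLp.inner_apply, RCLike.inner_apply, Fin.sum_univ_three]; ring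
    have hmne : m ≠ 0 := by
      intro h
      have h0 : m 0 = 0 := by rw [h]; rfl
      have h1 : m 1 = 0 := by rw [h]; rfl
      rw [hmdef] at h0 h1
      simp only [WithLp.equiv_symm_apply, PiLp.toLp_apply, Matrix.cons_val_zero, Matrix.cons_val_one,
        Matrix.head_cons] at h0 h1
      exact hwp ⟨by rw [hbdef] at h1; linarith, by rw [hadef] at h0; linarith⟩
    have hm2 : m 2 = 0 := by rw [hmdef]; simp [WithLp.equiv_symm_apply, PiLp.toLp_apply]
    have hwu : w ≠ u := fun h => hwp (by rw [h]; exact ⟨rfl, rfl⟩)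
    have hwv : w ≠ v := fun h => hwp (by rw [h, ← hx0, ← hx1]; exact ⟨rfl, rfl⟩)
    have hsub : ({u, v, w} : Set ℝ) ⊆
        {t ∈ Set.Ico (0:ℝ) (2*Real.pi) | (inner ℝ m (γ t) : ℝ) = a * γ u 0 + b * γ u 1} := by
      intro t ht
      simp only [Set.mem_insert_iff, Set.mem_singleton_iff] at ht
      rcases ht with rfl|rfl|rfl
      · exact ⟨hu, by rw [hinner]⟩
      · exact ⟨hv, by rw [hinner, ← hx0, ← hx1]⟩
      · refine ⟨hwI, ?_⟩
        rw [hinner, hadef, hbdef]; ring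
    have h3 : ({u, v, w} : Set ℝ).encard = 3 := by
      rw [Set.encard_insert_of_notMem (by simp [huv, Ne.symm hwu]),
        Set.encard_pair (Ne.symm hwv)]
      rfl
    have hcontra := le_trans (h3 ▸ Set.encard_mono hsub)
      (hvplane m (a * γ u 0 + b * γ u 1) hmne hm2)
    norm_num at hcontra
  -- uniform continuity of the horizontal derivative on a large interval
  set J := Set.Icc (-(2*Real.pi)) (4*Real.pi) with hJdef
  have hJc : IsCompact J := isCompact_Icc
  set ε := ρ₀^2/(8*R) with hεdef
  have hεpos : 0 < ε := by positivity
  obtain ⟨δ₀, hδ₀pos, hδ₀⟩ := Metric.uniformContinuousOn_iff.mp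
    (hJc.uniformContinuousOn_of_continuous (hdc 0).continuousOn) ε hεpos
  obtain ⟨δ₁, hδ₁pos, hδ₁⟩ := Metric.uniformContinuousOn_iff.mp
    (hJc.uniformContinuousOn_of_continuous (hdc 1).continuousOn) ε hεpos
  set δ := min (min (δ₀/2) (δ₁/2)) 1 with hδdef
  have hδpos : 0 < δ := by
    apply lt_min (lt_min (by linarith) (by linarith)) one_pos
  have hδle1 : δ ≤ 1 := min_le_right _ _
  have hδle0 : δ < δ₀ := lt_of_le_of_lt (le_trans (min_le_left _ _) (min_le_left _ _)) (by linarith)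
  have hδle1' : δ < δ₁ := lt_of_le_of_lt (le_trans (min_le_left _ _) (min_le_right _ _)) (by linarith)
  -- ordered chord estimate
  have key' : ∀ v ∈ J, ∀ u ∈ J, v ≤ u → u - v ≤ δ →
      ρ₀^2/2 * (u - v) ≤ (γ u 0 - γ v 0) * deriv γ v 0 + (γ u 1 - γ v 1) * deriv γ v 1 := by
    intro v hv u hu hvu hle
    have hIccJ : Set.Icc v u ⊆ J := by
      intro t ht
      exact ⟨le_trans hv.1 ht.1, le_trans ht.2 hu.2⟩
    set A := deriv γ v 0 with hAdef
    set B := deriv γ v 1 with hBdef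
    have hAabs : |A| ≤ R := by
      have h1 : |A| ≤ ρ v := by
        rw [hρdef, ← Real.sqrt_sq_eq_abs]
        exact Real.sqrt_le_sqrt (by nlinarith [sq_nonneg B])
      linarith [(hρglob v).2]
    have hBabs : |B| ≤ R := by
      have h1 : |B| ≤ ρ v := by
        rw [hρdef, ← Real.sqrt_sq_eq_abs]
        exact Real.sqrt_le_sqrt (by nlinarith [sq_nonneg A])
      linarith [(hρglob v).2]
    have hAB : ρ₀^2 ≤ A^2 + B^2 := by
      have h1 : ρ₀ ≤ ρ v := (hρglob v).1
      have h2 : ρ v ^ 2 = A^2 + B^2 := Real.sq_sqrt (by positivity)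
      nlinarith [hρ₀pos]
    have hεR : ε * R = ρ₀^2/8 := by rw [hεdef]; field_simp
    have hφd : ∀ t : ℝ, HasDerivAt (fun t => γ t 0 * A + γ t 1 * B)
        (deriv γ t 0 * A + deriv γ t 1 * B) t := fun t =>
      ((hX 0 t).mul_const A).add ((hX 1 t).mul_const B)
    have hderiv_ge : ∀ t ∈ interior (Set.Icc v u),
        ρ₀^2/2 ≤ deriv (fun t => γ t 0 * A + γ t 1 * B) t := by
      intro t ht
      have htI : t ∈ Set.Icc v u := interior_subset ht
      rw [(hφd t).deriv]
      have htJ : t ∈ J := hIccJ htI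
      have hdd : |t - v| ≤ δ := by
        rw [abs_of_nonneg (by linarith [htI.1])]
        linarith [htI.2]
      have h0 := hδ₀ t htJ v hv (by rw [Real.dist_eq]; linarith)
      have h1 := hδ₁ t htJ v hv (by rw [Real.dist_eq]; linarith)
      rw [Real.dist_eq] at h0 h1
      have e0 : -(ε*R) ≤ (deriv γ t 0 - A)*A := by
        have hle' : |(deriv γ t 0 - A)*A| ≤ ε*R := by
          rw [abs_mul]
          exact mul_le_mul (le_of_lt h0) hAabs (abs_nonneg _) (le_of_lt hεpos)
        linarith [neg_abs_le ((deriv γ t 0 - A)*A)]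
      have e1 : -(ε*R) ≤ (deriv γ t 1 - B)*B := by
        have hle' : |(deriv γ t 1 - B)*B| ≤ ε*R := by
          rw [abs_mul]
          exact mul_le_mul (le_of_lt h1) hBabs (abs_nonneg _) (le_of_lt hεpos)
        linarith [neg_abs_le ((deriv γ t 1 - B)*B)]
      have expand : deriv γ t 0 * A + deriv γ t 1 * B
          = (A^2 + B^2) + (deriv γ t 0 - A)*A + (deriv γ t 1 - B)*B := by ring
      rw [expand]
      linarith [sq_nonneg ρ₀]
    have hφc : Continuous (fun t => γ t 0 * A + γ t 1 * B) :=
      ((hXc 0).mul continuous_const).add ((hXc 1).mul continuous_const)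
    have hmv := (convex_Icc v u).mul_sub_le_image_sub_of_le_deriv
      hφc.continuousOn
      (fun t _ => (hφd t).differentiableAt.differentiableWithinAt)
      hderiv_ge v (Set.mem_Icc.2 ⟨le_refl v, hvu⟩) u (Set.mem_Icc.2 ⟨hvu, le_refl u⟩) hvu
    have : (γ u 0 * A + γ u 1 * B) - (γ v 0 * A + γ v 1 * B)
        = (γ u 0 - γ v 0) * A + (γ u 1 - γ v 1) * B := by ring
    linarith [hmv, this.le, this.ge]
  -- symmetric chord estimate
  have key : ∀ a ∈ J, ∀ b ∈ J, |a - b| ≤ δ →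
      ρ₀^2/(2*R) * |a - b| ≤ Real.sqrt ((γ a 0 - γ b 0)^2 + (γ a 1 - γ b 1)^2) := by
    have base : ∀ b ∈ J, ∀ a ∈ J, b ≤ a → a - b ≤ δ →
        ρ₀^2/(2*R) * (a - b) ≤ Real.sqrt ((γ a 0 - γ b 0)^2 + (γ a 1 - γ b 1)^2) := by
      intro b hb a ha hba hle
      have hk := key' b hb a ha hba hle
      have hcs := cs2' (γ a 0 - γ b 0) (deriv γ b 0) (γ a 1 - γ b 1) (deriv γ b 1)
      have hρb : Real.sqrt ((deriv γ b 0)^2 + (deriv γ b 1)^2) = ρ b := by rw [hρdef]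
      have hD0 : (0:ℝ) ≤ Real.sqrt ((γ a 0 - γ b 0)^2 + (γ a 1 - γ b 1)^2) :=
        Real.sqrt_nonneg _
      have hρbR : ρ b ≤ R := (hρglob b).2
      have h1 : ρ₀^2/2 * (a - b)
          ≤ Real.sqrt ((γ a 0 - γ b 0)^2 + (γ a 1 - γ b 1)^2) * R := by
        rw [hρb] at hcs
        have h2 : Real.sqrt ((γ a 0 - γ b 0)^2 + (γ a 1 - γ b 1)^2) * ρ b
            ≤ Real.sqrt ((γ a 0 - γ b 0)^2 + (γ a 1 - γ b 1)^2) * R :=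
          mul_le_mul_of_nonneg_left hρbR hD0
        linarith
      have heq : ρ₀^2/(2*R) * (a - b) * R = ρ₀^2/2 * (a - b) := by
        field_simp
      refine le_of_mul_le_mul_right ?_ hRpos
      linarith
    intro a ha b hb hab
    rcases le_total b a with h|h
    · have := base b hb a ha h (by rwa [abs_of_nonneg (by linarith)] at hab)
      rwa [abs_of_nonneg (by linarith)]
    · have := base a ha b hb h (by rwa [abs_sub_comm, abs_of_nonneg (by linarith)] at hab)
      have hsym : Real.sqrt ((γ a 0 - γ b 0)^2 + (γ a 1 - γ b 1)^2)
          = Real.sqrt ((γ b 0 - γ a 0)^2 + (γ b 1 - γ a 1)^2) := by ring_nf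
      rw [abs_sub_comm, abs_of_nonneg (by linarith), hsym]
      exact this
  -- bound on |z| on the period
  obtain ⟨vZ, hvZ, hmaxZ⟩ := (isCompact_Icc (a := (0:ℝ)) (b := 2*Real.pi)).exists_isMaxOn
    ⟨0, Set.mem_Icc.2 ⟨le_refl 0, by linarith⟩⟩ ((hXc 2).abs).continuousOn
  rw [isMaxOn_iff] at hmaxZ
  set Z := |γ vZ 2| with hZdef
  have hZ0 : 0 ≤ Z := abs_nonneg _
  have hZb : ∀ t ∈ Set.Icc (0:ℝ) (2*Real.pi), |γ t 2| ≤ Z := fun t ht => hmaxZ t ht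
  -- minimum horizontal distance for separated parameters
  set K : Set (ℝ × ℝ) := {p | p.1 ∈ Set.Icc (0:ℝ) (2*Real.pi) ∧ p.2 ∈ Set.Icc (0:ℝ) (2*Real.pi)
    ∧ δ ≤ |p.1 - p.2| ∧ |p.1 - p.2| ≤ 2*Real.pi - δ} with hKdef
  set g : ℝ × ℝ → ℝ :=
    fun p => Real.sqrt ((γ p.1 0 - γ p.2 0)^2 + (γ p.1 1 - γ p.2 1)^2) with hgdef
  have hgc : Continuous g := by
    apply Real.continuous_sqrt.comp
    exact ((((hXc 0).comp continuous_fst).sub ((hXc 0).comp continuous_snd)).pow 2).add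
      ((((hXc 1).comp continuous_fst).sub ((hXc 1).comp continuous_snd)).pow 2)
  have hKc : IsCompact K := by
    have h1 : K = ((Set.Icc (0:ℝ) (2*Real.pi) ×ˢ Set.Icc (0:ℝ) (2*Real.pi)) ∩
        {p : ℝ × ℝ | δ ≤ |p.1 - p.2|}) ∩ {p : ℝ × ℝ | |p.1 - p.2| ≤ 2*Real.pi - δ} := by
      ext p
      simp only [hKdef, Set.mem_setOf_eq, Set.mem_inter_iff, Set.mem_prod]
      tauto
    rw [h1]
    refine IsCompact.inter_right (IsCompact.inter_right (isCompact_Icc.prod isCompact_Icc) ?_) ?_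
    · exact isClosed_le continuous_const (continuous_fst.sub continuous_snd).abs
    · exact isClosed_le (continuous_fst.sub continuous_snd).abs continuous_const
  have hπ3 : (3:ℝ) < Real.pi := Real.pi_gt_three
  have hKne : ((0:ℝ), δ) ∈ K := by
    show (0:ℝ) ∈ Set.Icc (0:ℝ) (2*Real.pi) ∧ δ ∈ Set.Icc (0:ℝ) (2*Real.pi)
      ∧ δ ≤ |(0:ℝ) - δ| ∧ |(0:ℝ) - δ| ≤ 2*Real.pi - δ
    have h1 : |(0:ℝ) - δ| = δ := by rw [zero_sub, abs_neg, abs_of_pos hδpos]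
    rw [h1]
    exact ⟨Set.mem_Icc.2 ⟨le_refl 0, by linarith⟩,
      Set.mem_Icc.2 ⟨le_of_lt hδpos, by linarith⟩, le_refl δ, by linarith⟩
  obtain ⟨p₀, hp₀K, hminK⟩ := hKc.exists_isMinOn ⟨((0:ℝ), δ), hKne⟩ hgc.continuousOn
  rw [isMinOn_iff] at hminK
  set ε₀ := g p₀ with hε₀def
  have hε₀pos : 0 < ε₀ := by
    obtain ⟨hp1, hp2, hp3, hp4⟩ := hp₀K
    obtain ⟨u', hu', hγu', -, n₁, hn₁⟩ := hred p₀.1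
    obtain ⟨v', hv', hγv', -, n₂, hn₂⟩ := hred p₀.2
    have hne : u' ≠ v' := by
      intro h
      have hdiff : p₀.1 - p₀.2 = ((n₁ - n₂ : ℤ) : ℝ) * (2*Real.pi) := by
        push_cast
        rw [h] at hn₁
        linarith
      rcases eq_or_ne (n₁ - n₂) 0 with h0|h0
      · rw [h0] at hdiff
        simp at hdiff
        rw [hdiff] at hp3
        simp at hp3
        linarith
      · have h1 : (1:ℝ) ≤ |((n₁ - n₂ : ℤ) : ℝ)| := by
          exact_mod_cast Int.one_le_abs (by simpa using h0)
        have h2 : |p₀.1 - p₀.2| = |((n₁ - n₂ : ℤ) : ℝ)| * (2*Real.pi) := by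
          rw [hdiff, abs_mul, abs_of_pos pi2]
        nlinarith
    have hpr := hproj u' hu' v' hv' hne
    have hgeq : ε₀ = Real.sqrt ((γ u' 0 - γ v' 0)^2 + (γ u' 1 - γ v' 1)^2) := by
      rw [hε₀def, hgdef]
      simp only [hγu', hγv']
    rw [hgeq, Real.sqrt_pos]
    by_contra hc
    push_neg at hc
    refine hpr ⟨?_, ?_⟩ <;> nlinarith [sq_nonneg (γ u' 0 - γ v' 0), sq_nonneg (γ u' 1 - γ v' 1)]
  -- the secant constant
  set c₁ := ρ₀^2/(2*R) with hc₁def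
  have hc₁pos : 0 < c₁ := by positivity
  set Δ' := max ((Δ*R)/c₁) ((2*Z)/ε₀) with hΔ'def
  have hΔ'0 : 0 ≤ Δ' := le_trans (by positivity) (le_max_left ((Δ*R)/c₁) ((2*Z)/ε₀))
  refine ⟨Δ', hΔ'0, ?_⟩
  have halg : ∀ t D zz : ℝ, c₁ * t ≤ D → 0 ≤ t → |zz| ≤ Δ*R*t → |zz| ≤ Δ' * D := by
    intro t D zz hc ht hzz
    have hD0 : 0 ≤ D := le_trans (by positivity) hc
    have h1 : Δ*R*t = (Δ*R/c₁) * (c₁*t) := by field_simp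
    have h2 : (Δ*R/c₁) * (c₁*t) ≤ (Δ*R/c₁) * D := mul_le_mul_of_nonneg_left hc (by positivity)
    have h3 : (Δ*R/c₁) * D ≤ Δ' * D :=
      mul_le_mul_of_nonneg_right (le_max_left _ _) hD0
    linarith
  have main : ∀ a ∈ Set.Ico (0:ℝ) (2*Real.pi), ∀ b ∈ Set.Ico (0:ℝ) (2*Real.pi),
      |γ a 2 - γ b 2| ≤ Δ' * Real.sqrt ((γ a 0 - γ b 0)^2 + (γ a 1 - γ b 1)^2) := by
    intro a ha b hb
    have haJ : a ∈ J := Set.mem_Icc.2 ⟨by linarith [ha.1], by linarith [ha.2]⟩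
    have hbJ : b ∈ J := Set.mem_Icc.2 ⟨by linarith [hb.1], by linarith [hb.2]⟩
    rcases le_or_gt |a - b| δ with hnear|hfar
    · exact halg |a - b| _ _ (key a haJ b hbJ hnear) (abs_nonneg _) (hzLip a b)
    · rcases lt_or_ge |a - b| (2*Real.pi - δ) with hmid|hwrap
      · -- middle regime: compactness bound
        have hpK : (a, b) ∈ K :=
          ⟨Set.Ico_subset_Icc_self ha, Set.Ico_subset_Icc_self hb, le_of_lt hfar, le_of_lt hmid⟩
        have hD : ε₀ ≤ Real.sqrt ((γ a 0 - γ b 0)^2 + (γ a 1 - γ b 1)^2) := by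
          have := hminK (a, b) hpK
          rw [hgdef] at this
          exact this
        have hza := hZb a (Set.Ico_subset_Icc_self ha)
        have hzb := hZb b (Set.Ico_subset_Icc_self hb)
        have htri : |γ a 2 - γ b 2| ≤ 2*Z := by
          calc |γ a 2 - γ b 2| ≤ |γ a 2| + |γ b 2| := abs_sub _ _
            _ ≤ 2*Z := by linarith
        have h2 : (2*Z) = ((2*Z)/ε₀) * ε₀ := by field_simp
        have h3 : ((2*Z)/ε₀) * ε₀ ≤ ((2*Z)/ε₀) *
            Real.sqrt ((γ a 0 - γ b 0)^2 + (γ a 1 - γ b 1)^2) :=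
          mul_le_mul_of_nonneg_left hD (by positivity)
        have h4 : ((2*Z)/ε₀) * Real.sqrt ((γ a 0 - γ b 0)^2 + (γ a 1 - γ b 1)^2)
            ≤ Δ' * Real.sqrt ((γ a 0 - γ b 0)^2 + (γ a 1 - γ b 1)^2) :=
          mul_le_mul_of_nonneg_right (le_max_right _ _) (Real.sqrt_nonneg _)
        linarith
      · -- wrap-around regime
        rcases le_total a b with hab|hab
        · have hwrap' : 2*Real.pi - δ ≤ b - a := by
            rwa [abs_sub_comm, abs_of_nonneg (by linarith)] at hwrap
          have hbJ' : b - 2*Real.pi ∈ J := Set.mem_Icc.2 ⟨by linarith [hb.1], by linarith [hb.2]⟩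
          have hdist : |a - (b - 2*Real.pi)| ≤ δ := by
            rw [abs_of_nonneg (by linarith [ha.1, hb.2])]
            linarith
          have hγb : γ (b - 2*Real.pi) = γ b := by
            have h := hper (b - 2*Real.pi)
            rw [sub_add_cancel] at h
            exact h.symm
          have hkey := key a haJ (b - 2*Real.pi) hbJ' hdist
          rw [hγb] at hkey
          have hz := hzLip a (b - 2*Real.pi)
          rw [hγb] at hz
          exact halg _ _ _ hkey (abs_nonneg _) hz
        · have hwrap' : 2*Real.pi - δ ≤ a - b := by
            rwa [abs_of_nonneg (by linarith)] at hwrap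
          have haJ' : a - 2*Real.pi ∈ J := Set.mem_Icc.2 ⟨by linarith [ha.1], by linarith [ha.2]⟩
          have hdist : |(a - 2*Real.pi) - b| ≤ δ := by
            rw [abs_of_nonpos (by linarith [hb.1, ha.2])]
            linarith
          have hγa : γ (a - 2*Real.pi) = γ a := by
            have h := hper (a - 2*Real.pi)
            rw [sub_add_cancel] at h
            exact h.symm
          have hkey := key (a - 2*Real.pi) haJ' b hbJ hdist
          rw [hγa] at hkey
          have hz := hzLip (a - 2*Real.pi) b
          rw [hγa] at hz
          exact halg _ _ _ hkey (abs_nonneg _) hz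
  intro u₁ u₂ _
  obtain ⟨a, ha, hγa, -, -⟩ := hred u₁
  obtain ⟨b, hb, hγb, -, -⟩ := hred u₂
  rw [← hγa, ← hγb]
  exact main a ha b hb
end

section
/- Let γ : S¹ → ℝ³ be a smooth immersed closed curve such that (i) every vertical affine plane P ⊂ ℝ³ satisfies #{u ∈ S¹ : γ(u) ∈ P} ≤ 2; (ii) the curvature k = |γ_ss| of γ is positive everywhere and there exists Δ₅ ∈ [0,∞) such that every osculating plane of γ has slope at most Δ₅; and (iii) there exists Δ₃ ∈ [0,∞) such that every secant line of γ has slope at most Δ₃. Then there exists Δ′ ∈ [0,∞) such that γ satisfies the three-point condition with constant Δ′. -/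
open Set

local notation "π" => Real.pi
open Filter Topology


/-- Reduction of a real number modulo `2π` into `[0, 2π)`. -/
noncomputable def redmod (x : ℝ) : ℝ := toIcoMod Real.two_pi_pos 0 x

lemma redmod_mem (x : ℝ) : redmod x ∈ Set.Ico (0:ℝ) (2*π) := by
  have := toIcoMod_mem_Ico Real.two_pi_pos 0 x
  simpa [redmod] using this

lemma redmod_eq {α : Type*} (f : ℝ → α) (hf : Function.Periodic f (2*π)) (x : ℝ) :
    f (redmod x) = f x := by
  have h : redmod x = x - toIcoDiv Real.two_pi_pos 0 x • (2*π) := rfl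
  rw [h]
  have := (hf.zsmul (toIcoDiv Real.two_pi_pos 0 x)) (x - toIcoDiv Real.two_pi_pos 0 x • (2*π))
  rw [sub_add_cancel] at this
  exact this.symm

lemma redmod_ne {x y : ℝ} (hxy : x ≠ y) (h : |x - y| < 2*π) : redmod x ≠ redmod y := by
  intro he
  rcases (toIcoMod_eq_toIcoMod Real.two_pi_pos).mp he with ⟨n, hn⟩
  have hne : n ≠ 0 := by
    rintro rfl
    simp at hn
    exact hxy (by linarith)
  have h1 : (1:ℝ) ≤ |(n:ℝ)| := by
    exact_mod_cast Int.one_le_abs (by exact_mod_cast hne)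
  have : |y - x| = |(n:ℝ)| * (2*π) := by
    rw [hn]
    simp [abs_mul, abs_of_pos Real.two_pi_pos]
  rw [abs_sub_comm] at h
  nlinarith [Real.two_pi_pos]

lemma encard3 {S : Set ℝ} {a b c : ℝ} (ha : a ∈ S) (hb : b ∈ S) (hc : c ∈ S)
    (hab : a ≠ b) (hac : a ≠ c) (hbc : b ≠ c) : 3 ≤ S.encard := by
  have hsub : ({a, b, c} : Set ℝ) ⊆ S := by
    intro x hx; rcases hx with rfl | rfl | rfl
    exacts [ha, hb, hc]
  have h3 : ({a, b, c} : Set ℝ).encard = 3 := by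
    rw [Set.encard_insert_of_notMem (by simp [hab, hac]), Set.encard_pair hbc]
    rfl
  calc (3:ℕ∞) = ({a,b,c} : Set ℝ).encard := h3.symm
    _ ≤ S.encard := Set.encard_le_encard hsub

lemma three_level (f : ℝ → ℝ) (hf : Function.Periodic f (2*π)) (e : ℝ) {x y z : ℝ}
    (hx : f x = e) (hy : f y = e) (hz : f z = e)
    (hxy : x ≠ y) (hxz : x ≠ z) (hyz : y ≠ z)
    (dxy : |x - y| < 2*π) (dxz : |x - z| < 2*π) (dyz : |y - z| < 2*π) :
    3 ≤ ({u ∈ Set.Ico (0:ℝ) (2*π) | f u = e}).encard := by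
  apply encard3 (a := redmod x) (b := redmod y) (c := redmod z)
  · exact ⟨redmod_mem x, by rw [redmod_eq f hf]; exact hx⟩
  · exact ⟨redmod_mem y, by rw [redmod_eq f hf]; exact hy⟩
  · exact ⟨redmod_mem z, by rw [redmod_eq f hf]; exact hz⟩
  · exact redmod_ne hxy dxy
  · exact redmod_ne hxz dxz
  · exact redmod_ne hyz dyz

lemma exists_three_of_encard {S : Set ℝ} (h : 3 ≤ S.encard) :
    ∃ a b c, a ∈ S ∧ b ∈ S ∧ c ∈ S ∧ a < b ∧ b < c := by
  have h1 : 1 < S.encard := lt_of_lt_of_le (by norm_num) h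
  obtain ⟨a, ha⟩ : S.Nonempty := by
    rw [Set.nonempty_iff_ne_empty]; rintro rfl; simp at h
  obtain ⟨b, hb, hba⟩ := Set.exists_ne_of_one_lt_encard h1 a
  have : ¬ S ⊆ {a, b} := by
    intro hsub
    have h2 : S.encard ≤ 2 := le_trans (Set.encard_le_encard hsub)
      (le_trans (Set.encard_insert_le _ _) (by rw [Set.encard_singleton]; rfl))
    exact absurd (h.trans h2) (by decide)
  obtain ⟨c, hc, hcab⟩ := Set.not_subset.mp this
  simp only [Set.mem_insert_iff, Set.mem_singleton_iff, not_or] at hcab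
  obtain ⟨hca, hcb⟩ := hcab
  -- sort a b c
  rcases hba.lt_or_gt with h1' | h1' <;> rcases (Ne.symm hca).lt_or_gt with h2' | h2' <;>
    rcases (Ne.symm hcb).lt_or_gt with h3' | h3'
  · exact ⟨b, a, c, hb, ha, hc, h1', h2'⟩
  · linarith
  · exact ⟨b, c, a, hb, hc, ha, h3', h2'⟩
  · exact ⟨c, b, a, hc, hb, ha, h3', h1'⟩
  · exact ⟨a, b, c, ha, hb, hc, h1', h3'⟩
  · exact ⟨a, c, b, ha, hc, hb, h2', h3'⟩
  · linarith
  · exact ⟨c, a, b, hc, ha, hb, h2', h1'⟩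


lemma strict_local_min (f : ℝ → ℝ)
    (hc : Continuous f) (hd2 : Differentiable ℝ (deriv f))
    (hc2 : Continuous (deriv (deriv f)))
    {u : ℝ} (h1 : deriv f u = 0) (h2 : 0 < deriv (deriv f) u) :
    ∃ δ > 0, ∀ x, x ≠ u → |x - u| ≤ δ → f u < f x := by
  have hopen : IsOpen {x | 0 < deriv (deriv f) x} := isOpen_lt continuous_const hc2
  obtain ⟨δ', hδ', hball⟩ := Metric.isOpen_iff.mp hopen u h2
  set δ := δ'/2 with hδdef
  have hδ : 0 < δ := by positivity
  refine ⟨δ, hδ, ?_⟩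
  have hsub : Set.Icc (u - δ) (u + δ) ⊆ {x | 0 < deriv (deriv f) x} := by
    intro x hx
    apply hball
    rw [Metric.mem_ball, Real.dist_eq]
    rw [Set.mem_Icc] at hx
    rw [abs_sub_lt_iff]; constructor <;> linarith
  have hmono : StrictMonoOn (deriv f) (Set.Icc (u - δ) (u + δ)) := by
    apply strictMonoOn_of_deriv_pos (convex_Icc _ _) hd2.continuous.continuousOn
    intro x hx
    exact hsub (interior_subset hx)
  -- deriv f > 0 on (u, u+δ]
  have hpos : ∀ x ∈ Set.Ioc u (u + δ), 0 < deriv f x := by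
    intro x hx
    rw [← h1]
    exact hmono (Set.mem_Icc.mpr ⟨by linarith, by linarith⟩)
      (Set.mem_Icc.mpr ⟨by linarith [hx.1], hx.2⟩) hx.1
  have hneg : ∀ x ∈ Set.Ico (u - δ) u, deriv f x < 0 := by
    intro x hx
    rw [← h1]
    exact hmono (Set.mem_Icc.mpr ⟨hx.1, by linarith [hx.2]⟩)
      (Set.mem_Icc.mpr ⟨by linarith, by linarith⟩) hx.2
  have hup : StrictMonoOn f (Set.Icc u (u + δ)) := by
    apply strictMonoOn_of_deriv_pos (convex_Icc _ _) hc.continuousOn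
    intro x hx
    rw [interior_Icc] at hx
    exact hpos x ⟨hx.1, hx.2.le⟩
  have hdown : StrictAntiOn f (Set.Icc (u - δ) u) := by
    apply strictAntiOn_of_deriv_neg (convex_Icc _ _) hc.continuousOn
    intro x hx
    rw [interior_Icc] at hx
    exact hneg x ⟨hx.1.le, hx.2⟩
  intro x hxu hxd
  rw [abs_le] at hxd
  rcases hxu.lt_or_gt with hlt | hlt
  · exact hdown (Set.mem_Icc.mpr ⟨by linarith [hxd.1], hlt.le⟩)
      (Set.mem_Icc.mpr ⟨by linarith, le_refl u⟩) hlt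
  · exact hup (Set.mem_Icc.mpr ⟨le_refl u, by linarith⟩)
      (Set.mem_Icc.mpr ⟨hlt.le, by linarith [hxd.2]⟩) hlt

/-- Key tangency lemma: a periodic function whose level sets have at most two points per
period cannot have a strict local minimum value that is attained again elsewhere. -/
lemma tangent_case_aux (f : ℝ → ℝ) (hc : Continuous f)
    (hper : Function.Periodic f (2*π))
    (hcount : ∀ e : ℝ, ({u ∈ Set.Ico (0:ℝ) (2*π) | f u = e}).encard ≤ 2)
    (u w : ℝ) (hmin : ∃ δ > 0, ∀ x, x ≠ u → |x - u| ≤ δ → f u < f x)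
    (hfw : f w = f u) (hw1 : w ≠ u) (hw2 : |w - u| < 2*π) : False := by
  obtain ⟨δ₀, hδ₀, hloc⟩ := hmin
  set d := f u with hd
  -- translation invariance of the local minimum property
  have hshift : ∀ k : ℤ, ∀ x, x ≠ u + k • (2*π) → |x - (u + k • (2*π))| ≤ δ₀ →
      d < f x := by
    intro k x hx1 hx2
    have hper' := hper.zsmul k
    have hfx : f x = f (x - k • (2*π)) := by
      have := hper' (x - k • (2*π)); rw [sub_add_cancel] at this; exact this
    rw [hfx]
    apply hloc
    · intro he; apply hx1; rw [← he]; ring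
    · calc |x - k • (2*π) - u| = |x - (u + k • (2*π))| := by ring_nf
      _ ≤ δ₀ := hx2
  by_cases hneg : ∃ p, f p < d
  · -- Case (i): f takes a value below d
    obtain ⟨p, hp⟩ := hneg
    -- representative of u in [p, p + 2π)
    set k : ℤ := toIcoDiv Real.two_pi_pos p u with hk
    set v : ℝ := toIcoMod Real.two_pi_pos p u with hv
    have hvIco : v ∈ Set.Ico p (p + 2*π) := toIcoMod_mem_Ico _ _ _
    have hvu : v = u - k • (2*π) := rfl
    have hfv : f v = d := by
      rw [hvu]
      have := (hper.zsmul k) (u - k • (2*π)); rw [sub_add_cancel] at this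
      rw [← this]
    have hvp : p < v := by
      rcases hvIco.1.lt_or_eq with h | h
      · exact h
      · exfalso; rw [← h] at hfv; rw [hfv] at hp; exact lt_irrefl d hp
    have hlocv : ∀ x, x ≠ v → |x - v| ≤ δ₀ → d < f x := by
      intro x hx1 hx2
      have hrep : v = u + (-k) • (2*π) := by rw [hvu, neg_zsmul, ← sub_eq_add_neg]
      apply hshift (-k) x (by rw [← hrep]; exact hx1) (by rw [← hrep]; exact hx2)
    set ε : ℝ := min δ₀ (min ((v - p)/2) ((p + 2*π - v)/2)) with hε
    have hεpos : 0 < ε := by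
      apply lt_min hδ₀; apply lt_min <;> [skip; skip] <;> linarith [hvIco.2]
    have hε1 : ε ≤ δ₀ := min_le_left _ _
    have hε2 : ε ≤ (v - p)/2 := le_trans (min_le_right _ _) (min_le_left _ _)
    have hε3 : ε ≤ (p + 2*π - v)/2 := le_trans (min_le_right _ _) (min_le_right _ _)
    have hfa1 : d < f (v - ε) := hlocv _ (by intro h; nlinarith) (by rw [abs_sub_comm]; rw [abs_of_nonneg (by linarith)]; linarith)
    have hfa2 : d < f (v + ε) := hlocv _ (by intro h; nlinarith) (by rw [abs_of_nonneg (by linarith)]; linarith)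
    -- IVT on [p, v - ε]
    obtain ⟨z₁, hz₁, hfz₁⟩ : ∃ z₁ ∈ Set.Ioo p (v - ε), f z₁ = d := by
      have := intermediate_value_Ioo (a := p) (b := v - ε) (by linarith) hc.continuousOn
      have hmem : d ∈ Set.Ioo (f p) (f (v - ε)) := ⟨hp, hfa1⟩
      obtain ⟨z, hz, hfz⟩ := this hmem
      exact ⟨z, hz, hfz⟩
    obtain ⟨z₂, hz₂, hfz₂⟩ : ∃ z₂ ∈ Set.Ioo (v + ε) (p + 2*π), f z₂ = d := by
      have := intermediate_value_Ioo' (a := v + ε) (b := p + 2*π) (by linarith) hc.continuousOn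
      have hper2 : f (p + 2*π) = f p := hper p
      have hmem : d ∈ Set.Ioo (f (p + 2*π)) (f (v + ε)) := ⟨by rw [hper2]; exact hp, hfa2⟩
      obtain ⟨z, hz, hfz⟩ := this hmem
      exact ⟨z, hz, hfz⟩
    have h3 := three_level f hper d hfz₁ hfv hfz₂
      (by intro h; rw [h] at hz₁; linarith [hz₁.2])
      (by intro h; rw [h] at hz₁; linarith [hz₁.2, hz₂.1, hεpos])
      (by intro h; rw [h] at hz₂; linarith [hz₂.1])
      (by rw [abs_sub_lt_iff]
          constructor <;> linarith [hz₁.1, hz₁.2, hvIco.1, hvIco.2, hεpos, Real.pi_pos])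
      (by rw [abs_sub_lt_iff]
          constructor <;> linarith [hz₁.1, hz₁.2, hz₂.1, hz₂.2, hεpos, Real.pi_pos])
      (by rw [abs_sub_lt_iff]
          constructor <;> linarith [hz₂.1, hz₂.2, hvIco.1, hvIco.2, hεpos, Real.pi_pos])
    exact absurd (h3.trans (hcount d)) (by decide)
  · -- Case (ii): d is the global minimum value
    push_neg at hneg
    set w' : ℝ := if u < w then w else w + 2*π with hw'
    have hww'1 : u < w' := by
      rw [hw']; split_ifs with h
      · exact h
      · push_neg at h
        rcases h.lt_or_eq with h' | h'
        · rw [abs_sub_lt_iff] at hw2; linarith [hw2.2]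
        · exact absurd h' hw1
    have hww'2 : w' < u + 2*π := by
      rw [hw']; split_ifs with h
      · rw [abs_sub_lt_iff] at hw2; linarith [hw2.1]
      · push_neg at h
        rcases h.lt_or_eq with h' | h'
        · linarith
        · exact absurd h' hw1
    have hfw' : f w' = d := by
      rw [hw']; split_ifs
      · exact hfw
      · rw [hper w]; exact hfw
    set ε : ℝ := min δ₀ (min ((w' - u)/2) ((u + 2*π - w')/2)) with hε
    have hεpos : 0 < ε := by
      apply lt_min hδ₀; apply lt_min <;> linarith
    have hε1 : ε ≤ δ₀ := min_le_left _ _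
    have hε2 : ε ≤ (w' - u)/2 := le_trans (min_le_right _ _) (min_le_left _ _)
    have hε3 : ε ≤ (u + 2*π - w')/2 := le_trans (min_le_right _ _) (min_le_right _ _)
    have hfα1 : d < f (u - ε) := hloc _ (by intro h; nlinarith) (by rw [abs_sub_comm, abs_of_nonneg (by linarith)]; linarith)
    have hfα2 : d < f (u + ε) := hloc _ (by intro h; nlinarith) (by rw [abs_of_nonneg (by linarith)]; linarith)
    -- f (w' - ε) > d and f (w' + ε) > d using the counting hypothesis
    have hβ : ∀ β, u < β → β ≠ w' → β < u + 2*π → d < f β := by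
      intro β hβ1 hβ2 hβ3
      rcases (hneg β).lt_or_eq with h | h
      · exact h
      · exfalso
        have h3 := three_level f hper d rfl hfw' h.symm
          (by intro h'; rw [← h'] at hww'1; exact lt_irrefl u hww'1)
          (by intro h'; rw [← h'] at hβ1; exact lt_irrefl u hβ1)
          (by intro h'; exact hβ2 h'.symm)
          (by rw [abs_sub_lt_iff]; constructor <;> linarith)
          (by rw [abs_sub_lt_iff]; constructor <;> linarith)
          (by rw [abs_sub_lt_iff]; constructor <;> linarith)
        exact absurd (h3.trans (hcount d)) (by decide)
    have hfβ1 : d < f (w' - ε) := hβ _ (by linarith) (by intro h; nlinarith) (by linarith)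
    have hfβ2 : d < f (w' + ε) := hβ _ (by linarith) (by intro h; nlinarith) (by linarith)
    -- pick a level e slightly above d
    set em : ℝ := min (min (f (u - ε)) (f (u + ε))) (min (f (w' - ε)) (f (w' + ε))) with hem
    set e : ℝ := (d + em)/2 with he
    have hdem : d < em := by
      apply lt_min (lt_min hfα1 hfα2) (lt_min hfβ1 hfβ2)
    have hde : d < e := by rw [he]; linarith
    have heα1 : e < f (u - ε) := by
      have : em ≤ f (u - ε) := le_trans (min_le_left _ _) (min_le_left _ _)
      rw [he]; linarith
    have heα2 : e < f (u + ε) := by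
      have : em ≤ f (u + ε) := le_trans (min_le_left _ _) (min_le_right _ _)
      rw [he]; linarith
    have heβ1 : e < f (w' - ε) := by
      have : em ≤ f (w' - ε) := le_trans (min_le_right _ _) (min_le_left _ _)
      rw [he]; linarith
    obtain ⟨z₁, hz₁, hfz₁⟩ : ∃ z₁ ∈ Set.Ioo (u - ε) u, f z₁ = e := by
      have := intermediate_value_Ioo' (a := u - ε) (b := u) (by linarith) hc.continuousOn
      exact this ⟨by rw [← hd]; exact hde, heα1⟩
    obtain ⟨z₂, hz₂, hfz₂⟩ : ∃ z₂ ∈ Set.Ioo u (u + ε), f z₂ = e := by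
      have := intermediate_value_Ioo (a := u) (b := u + ε) (by linarith) hc.continuousOn
      exact this ⟨by rw [← hd]; exact hde, heα2⟩
    obtain ⟨z₃, hz₃, hfz₃⟩ : ∃ z₃ ∈ Set.Ioo (w' - ε) w', f z₃ = e := by
      have := intermediate_value_Ioo' (a := w' - ε) (b := w') (by linarith) hc.continuousOn
      exact this ⟨by rw [hfw']; exact hde, heβ1⟩
    have h3 := three_level f hper e hfz₁ hfz₂ hfz₃
      (by intro h; rw [h] at hz₁; linarith [hz₁.2, hz₂.1])
      (by intro h; rw [h] at hz₁; linarith [hz₁.2, hz₃.1])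
      (by intro h; rw [h] at hz₂; linarith [hz₂.2, hz₃.1])
      (by rw [abs_sub_lt_iff]
          constructor <;> linarith [hz₁.1, hz₁.2, hz₂.1, hz₂.2, hεpos, Real.pi_pos])
      (by rw [abs_sub_lt_iff]
          constructor <;> linarith [hz₁.1, hz₁.2, hz₃.1, hz₃.2, hεpos, Real.pi_pos, hww'1, hww'2, hε2, hε3])
      (by rw [abs_sub_lt_iff]
          constructor <;> linarith [hz₂.1, hz₂.2, hz₃.1, hz₃.2, hεpos, Real.pi_pos, hww'1, hww'2, hε2, hε3])
    exact absurd (h3.trans (hcount e)) (by decide)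

lemma tangent_case (f : ℝ → ℝ) (hc : Continuous f)
    (hd2 : Differentiable ℝ (deriv f)) (hc2 : Continuous (deriv (deriv f)))
    (hper : Function.Periodic f (2*π))
    (hcount : ∀ e : ℝ, ({u ∈ Set.Ico (0:ℝ) (2*π) | f u = e}).encard ≤ 2)
    (u w : ℝ) (h1 : deriv f u = 0) (h2 : deriv (deriv f) u ≠ 0)
    (hfw : f w = f u) (hw1 : w ≠ u) (hw2 : |w - u| < 2*π) : False := by
  rcases h2.lt_or_gt with hneg | hpos
  · -- apply everything to -f
    have hdn : deriv (fun x => -f x) = fun x => -deriv f x := funext fun x => deriv.neg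
    have hddn : deriv (deriv (fun x => -f x)) = fun x => -(deriv (deriv f) x) := by
      rw [hdn]; exact funext fun x => deriv.neg
    have hmin : ∃ δ > 0, ∀ x, x ≠ u → |x - u| ≤ δ → (fun x => -f x) u < (fun x => -f x) x := by
      apply strict_local_min (fun x => -f x) hc.neg
      · rw [hdn]; exact hd2.neg
      · rw [hddn]; exact hc2.neg
      · rw [hdn]; simp [h1]
      · rw [hddn]; simpa using hneg
    apply tangent_case_aux (fun x => -f x) hc.neg (fun x => by simp [hper x]) ?_ u w hmin
      (by simpa using hfw) hw1 hw2
    intro e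
    have := hcount (-e)
    have hset : {u ∈ Set.Ico (0:ℝ) (2*π) | -f u = e} = {u ∈ Set.Ico (0:ℝ) (2*π) | f u = -e} := by
      ext x; simp [neg_eq_iff_eq_neg]
    rw [hset]; exact this
  · exact tangent_case_aux f hc hper hcount u w
      (strict_local_min f hc hd2 hc2 h1 hpos) hfw hw1 hw2

lemma hasDerivAt_inner_const (m : EuclideanSpace ℝ (Fin 3)) {g : ℝ → EuclideanSpace ℝ (Fin 3)}
    (hg : Differentiable ℝ g) (u : ℝ) :
    HasDerivAt (fun v => (inner ℝ m (g v) : ℝ)) (inner ℝ m (deriv g u)) u := by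
  have h := (hasDerivAt_const u m).inner ℝ ((hg u).hasDerivAt)
  simpa using h

lemma sqrt01_le_norm (m : EuclideanSpace ℝ (Fin 3)) :
    Real.sqrt ((m 0)^2 + (m 1)^2) ≤ ‖m‖ := by
  rw [EuclideanSpace.norm_eq]
  apply Real.sqrt_le_sqrt
  rw [Fin.sum_univ_three]
  simp only [Real.norm_eq_abs, sq_abs]
  nlinarith [sq_nonneg (m 2)]



/-- For a smooth immersed closed curve in `ℝ³`, if every vertical plane
meets the curve in at most two points, the curvature is everywhere positive with all
osculating planes of slope at most `Δ₅`, and all secant lines have slope at most `Δ₃`, then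
the curve satisfies the three-point condition with some constant `Δ′ ∈ [0,∞)`. -/
theorem statement15
    (γ : ℝ → EuclideanSpace ℝ (Fin 3))
    (hsm : ContDiff ℝ (⊤ : ℕ∞) γ)
    (hper : ∀ u, γ (u + 2*Real.pi) = γ u)
    (himm : ∀ u, deriv γ u ≠ 0)
    (hvplane : ∀ (m : EuclideanSpace ℝ (Fin 3)) (d : ℝ), m ≠ 0 → m 2 = 0 →
      ({u ∈ Set.Ico (0:ℝ) (2*Real.pi) | (inner ℝ m (γ u) : ℝ) = d}).encard ≤ 2)
    (hcurv : ∀ u : ℝ, 0 < ‖aderiv γ (aderiv γ γ) u‖)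
    (Δ₅ : ℝ) (hΔ₅ : 0 ≤ Δ₅)
    (hosc : ∀ (u : ℝ) (m : EuclideanSpace ℝ (Fin 3)), m ≠ 0 →
      (inner ℝ m (deriv γ u) : ℝ) = 0 → (inner ℝ m (aderiv γ (aderiv γ γ) u) : ℝ) = 0 →
      Real.sqrt ((m 0)^2 + (m 1)^2) ≤ Δ₅ * |m 2|)
    (Δ₃ : ℝ) (hΔ₃ : 0 ≤ Δ₃)
    (hsec : ∀ u₁ u₂ : ℝ, γ u₁ ≠ γ u₂ →
      |γ u₁ 2 - γ u₂ 2| ≤ Δ₃ * Real.sqrt ((γ u₁ 0 - γ u₂ 0)^2 + (γ u₁ 1 - γ u₂ 1)^2)) :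
    ∃ Δ' : ℝ, 0 ≤ Δ' ∧ ThreePointCond γ Δ' := by
  -- smoothness bookkeeping
  have hsm1 : ContDiff ℝ (⊤:ℕ∞) γ := hsm.of_le (by simp)
  have hγd : Differentiable ℝ γ := (contDiff_infty_iff_deriv.mp hsm1).1
  have hsm2 : ContDiff ℝ (⊤:ℕ∞) (deriv γ) := (contDiff_infty_iff_deriv.mp hsm1).2
  have hγ'd : Differentiable ℝ (deriv γ) := (contDiff_infty_iff_deriv.mp hsm2).1
  have hγ''c : Continuous (deriv (deriv γ)) := (contDiff_infty_iff_deriv.mp hsm2).2.continuous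
  have hγper : Function.Periodic γ (2*π) := hper
  by_contra hcon
  push_neg at hcon
  -- extract a sequence of bad planes with unit normals
  have H : ∀ n : ℕ, ∃ m : EuclideanSpace ℝ (Fin 3), ∃ d : ℝ, ‖m‖ = 1 ∧
      (3:ℕ∞) ≤ ({u ∈ Set.Ico (0:ℝ) (2*π) | (inner ℝ m (γ u) : ℝ) = d}).encard ∧
      (n:ℝ) * |m 2| < 1 := by
    intro n
    have hn := hcon n (Nat.cast_nonneg n)
    rw [ThreePointCond] at hn
    push_neg at hn
    obtain ⟨m, d, hm0, hcard, hslope⟩ := hn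
    have hnm : ‖m‖ ≠ 0 := norm_ne_zero_iff.mpr hm0
    have hc : 0 < ‖m‖⁻¹ := inv_pos.mpr (norm_pos_iff.mpr hm0)
    refine ⟨‖m‖⁻¹ • m, ‖m‖⁻¹ * d, ?_, ?_, ?_⟩
    · rw [norm_smul, norm_inv, norm_norm, inv_mul_cancel₀ hnm]
    · have hset : {u ∈ Set.Ico (0:ℝ) (2*π) | (inner ℝ (‖m‖⁻¹ • m) (γ u) : ℝ) = ‖m‖⁻¹ * d}
          = {u ∈ Set.Ico (0:ℝ) (2*π) | (inner ℝ m (γ u) : ℝ) = d} := by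
        ext x
        simp only [Set.mem_setOf_eq, real_inner_smul_left, and_congr_right_iff]
        intro _
        constructor
        · intro h; exact mul_left_cancel₀ (inv_ne_zero hnm) h
        · intro h; rw [h]
      rw [hset]; exact hcard
    · have happ : ∀ i : Fin 3, (‖m‖⁻¹ • m) i = ‖m‖⁻¹ * m i := fun i => rfl
      rw [happ 2, abs_mul, abs_of_pos hc]
      have h1 : (n:ℝ) * |m 2| < Real.sqrt ((m 0)^2 + (m 1)^2) := hslope
      have h2 : Real.sqrt ((m 0)^2 + (m 1)^2) ≤ ‖m‖ := sqrt01_le_norm m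
      calc (n:ℝ) * (‖m‖⁻¹ * |m 2|) = ‖m‖⁻¹ * ((n:ℝ) * |m 2|) := by ring
        _ < ‖m‖⁻¹ * ‖m‖ := by
            apply mul_lt_mul_of_pos_left _ hc
            exact h1.trans_le h2
        _ = 1 := inv_mul_cancel₀ hnm
  choose M D hMnorm hMcard hMsl using H
  -- three zeros for each n
  have Z : ∀ n, ∃ a b c : ℝ,
      a ∈ {u ∈ Set.Ico (0:ℝ) (2*π) | (inner ℝ (M n) (γ u) : ℝ) = D n} ∧
      b ∈ {u ∈ Set.Ico (0:ℝ) (2*π) | (inner ℝ (M n) (γ u) : ℝ) = D n} ∧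
      c ∈ {u ∈ Set.Ico (0:ℝ) (2*π) | (inner ℝ (M n) (γ u) : ℝ) = D n} ∧
      a < b ∧ b < c := fun n => exists_three_of_encard (hMcard n)
  choose A B C hA hB hC hAB hBC using Z
  -- compactness
  have hK : IsCompact ((Metric.sphere (0:EuclideanSpace ℝ (Fin 3)) 1) ×ˢ
      (Set.Icc (0:ℝ) (2*π) ×ˢ Set.Icc (0:ℝ) (2*π) ×ˢ Set.Icc (0:ℝ) (2*π))) :=
    (isCompact_sphere 0 1).prod ((isCompact_Icc).prod ((isCompact_Icc).prod isCompact_Icc))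
  have hXmem : ∀ n, (M n, A n, B n, C n) ∈ (Metric.sphere (0:EuclideanSpace ℝ (Fin 3)) 1) ×ˢ
      (Set.Icc (0:ℝ) (2*π) ×ˢ Set.Icc (0:ℝ) (2*π) ×ˢ Set.Icc (0:ℝ) (2*π)) := by
    intro n
    refine ⟨mem_sphere_zero_iff_norm.mpr (hMnorm n), ?_, ?_, ?_⟩
    · exact Set.Ico_subset_Icc_self (hA n).1
    · exact Set.Ico_subset_Icc_self (hB n).1
    · exact Set.Ico_subset_Icc_self (hC n).1
  obtain ⟨⟨m, v₁, v₂, v₃⟩, hmemK, φ, hφ, hlim⟩ := hK.tendsto_subseq hXmem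
  have hMlim : Tendsto (fun n => M (φ n)) atTop (𝓝 m) :=
    (continuous_fst.tendsto _).comp hlim
  have hAlim : Tendsto (fun n => A (φ n)) atTop (𝓝 v₁) :=
    (continuous_fst.tendsto _).comp ((continuous_snd.tendsto _).comp hlim)
  have hBlim : Tendsto (fun n => B (φ n)) atTop (𝓝 v₂) :=
    (continuous_fst.tendsto _).comp ((continuous_snd.tendsto _).comp
      ((continuous_snd.tendsto _).comp hlim))
  have hClim : Tendsto (fun n => C (φ n)) atTop (𝓝 v₃) :=
    (continuous_snd.tendsto _).comp ((continuous_snd.tendsto _).comp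
      ((continuous_snd.tendsto _).comp hlim))
  have hmnorm : ‖m‖ = 1 := mem_sphere_zero_iff_norm.mp hmemK.1
  have hm0 : m ≠ 0 := by
    intro h; rw [h, norm_zero] at hmnorm; norm_num at hmnorm
  -- the limit plane is vertical
  have hm2 : m 2 = 0 := by
    have hproj : Tendsto (fun n => M (φ n) 2) atTop (𝓝 (m 2)) :=
      ((EuclideanSpace.proj (2 : Fin 3)).continuous.tendsto _).comp hMlim
    have habs : Tendsto (fun n => |M (φ n) 2|) atTop (𝓝 |m 2|) := hproj.abs
    have hzero : Tendsto (fun n => |M (φ n) 2|) atTop (𝓝 0) := by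
      apply tendsto_of_tendsto_of_tendsto_of_le_of_le' (g := fun _ => (0:ℝ))
        (h := fun n => 1/(φ n : ℝ)) tendsto_const_nhds
      · exact tendsto_one_div_atTop_nhds_zero_nat.comp hφ.tendsto_atTop
      · exact Eventually.of_forall fun n => abs_nonneg _
      · filter_upwards [eventually_ge_atTop 1] with n hn
        have hφn : (1:ℝ) ≤ (φ n : ℝ) := by
          have h2 : n ≤ φ n := hφ.le_apply
          exact_mod_cast by omega
        have hfn : (φ n : ℝ) * |M (φ n) 2| < 1 := hMsl (φ n)
        rw [le_div_iff₀ (by linarith)]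
        calc |M (φ n) 2| * (φ n : ℝ) = (φ n : ℝ) * |M (φ n) 2| := by ring
          _ ≤ 1 := hfn.le
    have := tendsto_nhds_unique habs hzero
    exact abs_eq_zero.mp this
  -- limit level value
  set d : ℝ := @inner ℝ _ _ m (γ v₁) with hd
  have hDlim : Tendsto (fun n => D (φ n)) atTop (𝓝 d) := by
    have h := Filter.Tendsto.inner (𝕜 := ℝ) hMlim ((hγd.continuous.tendsto v₁).comp hAlim)
    simp only [Function.comp_def] at h
    have he : (fun n => (inner ℝ (M (φ n)) (γ (A (φ n))) : ℝ)) = fun n => D (φ n) :=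
      funext fun n => (hA (φ n)).2
    rwa [he] at h
  have level : ∀ (s : ℕ → ℝ) (v : ℝ), Tendsto s atTop (𝓝 v) →
      (∀ n, (inner ℝ (M (φ n)) (γ (s n)) : ℝ) = D (φ n)) → (inner ℝ m (γ v) : ℝ) = d := by
    intro s v hs hz
    have h := Filter.Tendsto.inner (𝕜 := ℝ) hMlim ((hγd.continuous.tendsto v).comp hs)
    simp only [Function.comp_def] at h
    rw [funext hz] at h
    exact tendsto_nhds_unique h hDlim
  have limzero : ∀ (g : ℝ → EuclideanSpace ℝ (Fin 3)), Continuous g →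
      ∀ (r : ℕ → ℝ) (v : ℝ), Tendsto r atTop (𝓝 v) →
      (∀ n, (inner ℝ (M (φ n)) (g (r n)) : ℝ) = 0) → (inner ℝ m (g v) : ℝ) = 0 := by
    intro g hg r v hr hz
    have h := Filter.Tendsto.inner (𝕜 := ℝ) hMlim ((hg.tendsto v).comp hr)
    simp only [Function.comp_def] at h
    rw [funext hz] at h
    exact tendsto_nhds_unique h tendsto_const_nhds
  -- Rolle + limit
  have rolle : ∀ (g : ℝ → EuclideanSpace ℝ (Fin 3)), Differentiable ℝ g →
      ∀ (a b : ℕ → ℝ) (v : ℝ), (∀ n, a n < b n) →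
      (∀ n, (inner ℝ (M (φ n)) (g (a n)) : ℝ) = (inner ℝ (M (φ n)) (g (b n)) : ℝ)) →
      Tendsto a atTop (𝓝 v) → Tendsto b atTop (𝓝 v) →
      ∃ r : ℕ → ℝ, (∀ n, r n ∈ Set.Ioo (a n) (b n)) ∧
        (∀ n, (inner ℝ (M (φ n)) (deriv g (r n)) : ℝ) = 0) ∧ Tendsto r atTop (𝓝 v) := by
    intro g hgd a b v hab heq ha hb
    have hex : ∀ n, ∃ r ∈ Set.Ioo (a n) (b n), (inner ℝ (M (φ n)) (deriv g r) : ℝ) = 0 := by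
      intro n
      have hcont : ContinuousOn (fun x => (inner ℝ (M (φ n)) (g x) : ℝ)) (Set.Icc (a n) (b n)) :=
        (continuous_const.inner hgd.continuous).continuousOn
      obtain ⟨r, hr, hr0⟩ := exists_deriv_eq_zero (hab n) hcont (heq n)
      refine ⟨r, hr, ?_⟩
      rw [← (hasDerivAt_inner_const (M (φ n)) hgd r).deriv]
      exact hr0
    choose r hr1 hr2 using hex
    refine ⟨r, hr1, hr2, ?_⟩
    exact tendsto_of_tendsto_of_tendsto_of_le_of_le ha hb
      (fun n => (hr1 n).1.le) (fun n => (hr1 n).2.le)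
  -- osculating-plane contradiction
  have hoscContra : ∀ v : ℝ, (inner ℝ m (deriv γ v) : ℝ) = 0 →
      (inner ℝ m (deriv (deriv γ) v) : ℝ) = 0 → False := by
    intro v h1 h2
    have hnz : deriv γ v ≠ 0 := himm v
    have hnorm : DifferentiableAt ℝ (fun x => ‖deriv γ x‖) v :=
      DifferentiableAt.norm ℝ (hγ'd v) hnz
    have hninv : DifferentiableAt ℝ (fun x => ‖deriv γ x‖⁻¹) v :=
      hnorm.inv (norm_ne_zero_iff.mpr hnz)
    have hT : HasDerivAt (fun x => ‖deriv γ x‖⁻¹ • deriv γ x)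
        (‖deriv γ v‖⁻¹ • deriv (deriv γ) v +
          (deriv (fun x => ‖deriv γ x‖⁻¹) v) • deriv γ v) v :=
      (hninv.hasDerivAt).smul ((hγ'd v).hasDerivAt)
    have key : (inner ℝ m (aderiv γ (aderiv γ γ) v) : ℝ) = 0 := by
      have hfun : aderiv γ γ = fun x => ‖deriv γ x‖⁻¹ • deriv γ x := rfl
      have haa : aderiv γ (aderiv γ γ) v = ‖deriv γ v‖⁻¹ •
          (‖deriv γ v‖⁻¹ • deriv (deriv γ) v +
            (deriv (fun x => ‖deriv γ x‖⁻¹) v) • deriv γ v) := by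
        show ‖deriv γ v‖⁻¹ • deriv (aderiv γ γ) v = _
        rw [hfun, hT.deriv]
      rw [haa, real_inner_smul_right, inner_add_right, real_inner_smul_right,
        real_inner_smul_right, h1, h2]
      ring
    have hbound := hosc v m hm0 h1 key
    rw [hm2] at hbound
    simp only [abs_zero, mul_zero] at hbound
    have hone : Real.sqrt ((m 0)^2 + (m 1)^2) = 1 := by
      have hn := hmnorm
      rw [EuclideanSpace.norm_eq, Fin.sum_univ_three] at hn
      simp only [Real.norm_eq_abs, sq_abs] at hn
      rw [hm2] at hn
      simpa using hn
    rw [hone] at hbound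
    linarith
  -- abbreviations
  have hfc : Continuous (fun u => (inner ℝ m (γ u) : ℝ)) := continuous_const.inner hγd.continuous
  have hfper : Function.Periodic (fun u => (inner ℝ m (γ u) : ℝ)) (2*π) := by
    intro x; simp [hper x]
  have hcount : ∀ e : ℝ,
      ({u ∈ Set.Ico (0:ℝ) (2*π) | (inner ℝ m (γ u) : ℝ) = e}).encard ≤ 2 :=
    fun e => hvplane m e hm0 hm2
  -- zero values rewritten for the subsequence
  have hAz : ∀ n, (inner ℝ (M (φ n)) (γ (A (φ n))) : ℝ) = D (φ n) := fun n => (hA (φ n)).2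
  have hBz : ∀ n, (inner ℝ (M (φ n)) (γ (B (φ n))) : ℝ) = D (φ n) := fun n => (hB (φ n)).2
  have hCz : ∀ n, (inner ℝ (M (φ n)) (γ (C (φ n))) : ℝ) = D (φ n) := fun n => (hC (φ n)).2
  have hABφ : ∀ n, A (φ n) < B (φ n) := fun n => hAB (φ n)
  have hBCφ : ∀ n, B (φ n) < C (φ n) := fun n => hBC (φ n)
  -- shifted zeros
  have hshiftz : ∀ (s : ℕ → ℝ), (∀ n, (inner ℝ (M (φ n)) (γ (s n)) : ℝ) = D (φ n)) →
      (∀ n, (inner ℝ (M (φ n)) (γ (s n - 2*π)) : ℝ) = D (φ n)) := by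
    intro s hs n
    have : γ (s n) = γ (s n - 2*π) := by
      have := hper (s n - 2*π); rw [sub_add_cancel] at this; exact this
    rw [← this]; exact hs n
  -- generic triple-merge case
  have caseB : ∀ (a b c : ℕ → ℝ) (v : ℝ), (∀ n, a n < b n) → (∀ n, b n < c n) →
      (∀ n, (inner ℝ (M (φ n)) (γ (a n)) : ℝ) = D (φ n)) →
      (∀ n, (inner ℝ (M (φ n)) (γ (b n)) : ℝ) = D (φ n)) →
      (∀ n, (inner ℝ (M (φ n)) (γ (c n)) : ℝ) = D (φ n)) →
      Tendsto a atTop (𝓝 v) → Tendsto b atTop (𝓝 v) → Tendsto c atTop (𝓝 v) → False := by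
    intro a b c v hab hbc haz hbz hcz hta htb htc
    obtain ⟨r, hr1, hr2, hr3⟩ := rolle γ hγd a b v hab
      (fun n => (haz n).trans (hbz n).symm) hta htb
    obtain ⟨s, hs1, hs2, hs3⟩ := rolle γ hγd b c v hbc
      (fun n => (hbz n).trans (hcz n).symm) htb htc
    have hrs : ∀ n, r n < s n := fun n => (hr1 n).2.trans (hs1 n).1
    obtain ⟨t, ht1, ht2, ht3⟩ := rolle (deriv γ) hγ'd r s v hrs
      (fun n => (hr2 n).trans (hs2 n).symm) hr3 hs3
    exact hoscContra v (limzero (deriv γ) hγ'd.continuous r v hr3 hr2)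
      (limzero (deriv (deriv γ)) hγ''c t v ht3 ht2)
  -- generic double-merge case
  have caseC : ∀ (a b c : ℕ → ℝ) (v w : ℝ), (∀ n, a n < b n) →
      (∀ n, (inner ℝ (M (φ n)) (γ (a n)) : ℝ) = D (φ n)) →
      (∀ n, (inner ℝ (M (φ n)) (γ (b n)) : ℝ) = D (φ n)) →
      (∀ n, (inner ℝ (M (φ n)) (γ (c n)) : ℝ) = D (φ n)) →
      Tendsto a atTop (𝓝 v) → Tendsto b atTop (𝓝 v) → Tendsto c atTop (𝓝 w) →
      w ≠ v → |w - v| < 2*π → False := by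
    intro a b c v w hab haz hbz hcz hta htb htc hw1 hw2
    obtain ⟨r, hr1, hr2, hr3⟩ := rolle γ hγd a b v hab
      (fun n => (haz n).trans (hbz n).symm) hta htb
    have h1 : (inner ℝ m (deriv γ v) : ℝ) = 0 := limzero (deriv γ) hγ'd.continuous r v hr3 hr2
    by_cases h2 : (inner ℝ m (deriv (deriv γ) v) : ℝ) = 0
    · exact hoscContra v h1 h2
    · have hfv : (inner ℝ m (γ v) : ℝ) = d := level a v hta haz
      have hfw : (inner ℝ m (γ w) : ℝ) = d := level c w htc hcz
      have hdf : deriv (fun u => (inner ℝ m (γ u) : ℝ)) = fun x => (inner ℝ m (deriv γ x) : ℝ) :=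
        funext fun x => (hasDerivAt_inner_const m hγd x).deriv
      have hddf : deriv (deriv (fun u => (inner ℝ m (γ u) : ℝ)))
          = fun x => (inner ℝ m (deriv (deriv γ) x) : ℝ) := by
        rw [hdf]; exact funext fun x => (hasDerivAt_inner_const m hγ'd x).deriv
      apply tangent_case (fun u => (inner ℝ m (γ u) : ℝ)) hfc ?_ ?_ hfper hcount v w ?_ ?_
        (hfw.trans hfv.symm) hw1 hw2
      · rw [hdf]; exact fun x => ((hasDerivAt_inner_const m hγ'd x).differentiableAt)
      · rw [hddf]; exact continuous_const.inner hγ''c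
      · rw [hdf]; exact h1
      · rw [hddf]; exact h2
  -- positions of limits
  have hv1m : (0:ℝ) ≤ v₁ ∧ v₁ ≤ 2*π := Set.mem_Icc.mp hmemK.2.1
  have hv2m : (0:ℝ) ≤ v₂ ∧ v₂ ≤ 2*π := Set.mem_Icc.mp hmemK.2.2.1
  have hv3m : (0:ℝ) ≤ v₃ ∧ v₃ ≤ 2*π := Set.mem_Icc.mp hmemK.2.2.2
  have hv12 : v₁ ≤ v₂ := le_of_tendsto_of_tendsto' hAlim hBlim fun n => (hABφ n).le
  have hv23 : v₂ ≤ v₃ := le_of_tendsto_of_tendsto' hBlim hClim fun n => (hBCφ n).le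
  have hBsh : Tendsto (fun n => B (φ n) - 2*π) atTop (𝓝 (v₂ - 2*π)) := hBlim.sub_const _
  have hCsh : Tendsto (fun n => C (φ n) - 2*π) atTop (𝓝 (v₃ - 2*π)) := hClim.sub_const _
  have hCA : ∀ n, C (φ n) - 2*π < A (φ n) := by
    intro n
    have h1 := (hC (φ n)).1.2
    have h2 := (hA (φ n)).1.1
    linarith [(hC (φ n)).1.2, (hA (φ n)).1.1]
  by_cases h12 : v₁ = v₂ <;> by_cases h23 : v₂ = v₃ <;> by_cases hW : v₁ = 0 ∧ v₃ = 2*π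
  -- 1: triple merge
  · exact caseB _ _ _ v₁ hABφ hBCφ hAz hBz hCz hAlim (by rw [h12]; exact hBlim)
      (by rw [h12, h23]; exact hClim)
  -- 2: triple merge
  · exact caseB _ _ _ v₁ hABφ hBCφ hAz hBz hCz hAlim (by rw [h12]; exact hBlim)
      (by rw [h12, h23]; exact hClim)
  -- 3: v₁ = v₂ = 0, v₃ = 2π : triple merge at 0 with wrap
  · exact caseB _ _ _ 0 hCA hABφ (hshiftz _ hCz) hAz hBz
      (by have := hCsh; rw [hW.2, sub_self] at this; exact this)
      (by rw [← hW.1]; exact hAlim)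
      (by rw [← hW.1, h12]; exact hBlim)
  -- 4: pair (A,B) → v₁, third C → v₃
  · have hw1 : v₃ ≠ v₁ := fun h => h23 (h12.symm.trans h.symm)
    have habs : |v₃ - v₁| < 2*π := by
      rw [abs_of_nonneg (by linarith)]
      rcases lt_or_eq_of_le (show v₃ - v₁ ≤ 2*π by linarith [hv1m.1, hv3m.2]) with h | h
      · exact h
      · exact absurd ⟨by linarith, by linarith⟩ hW
    exact caseC _ _ _ v₁ v₃ hABφ hAz hBz hCz hAlim (by rw [h12]; exact hBlim) hClim hw1 habs
  -- 5: v₂ = v₃ = 2π, v₁ = 0 : triple merge at 0 with wrap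
  · refine caseB (fun n => B (φ n) - 2*π) (fun n => C (φ n) - 2*π) _ 0
      (fun n => by have := hBCφ n; linarith) hCA (hshiftz _ hBz) (hshiftz _ hCz) hAz
      ?_ ?_ ?_
    · have := hBsh; rw [h23, hW.2, sub_self] at this; exact this
    · have := hCsh; rw [hW.2, sub_self] at this; exact this
    · rw [← hW.1]; exact hAlim
  -- 6: pair (B,C) → v₂, third A → v₁
  · have hw1 : v₁ ≠ v₂ := h12
    have habs : |v₁ - v₂| < 2*π := by
      rw [abs_of_nonpos (by linarith)]
      rcases lt_or_eq_of_le (show -(v₁ - v₂) ≤ 2*π by linarith [hv1m.1, hv2m.2]) with h | h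
      · exact h
      · exfalso
        apply hW
        constructor <;> linarith [hv2m.2, hv23, hv3m.2]
    exact caseC _ _ _ v₂ v₁ hBCφ hBz hCz hAz hBlim (by rw [h23]; exact hClim) hAlim hw1 habs
  -- 7: wrap pair (C-2π, A) → 0, third B → v₂
  · have hv10 : v₁ = 0 := hW.1
    have hw1 : v₂ ≠ 0 := fun h => h12 (by rw [hv10, h])
    have habs : |v₂ - 0| < 2*π := by
      rw [sub_zero, abs_of_nonneg hv2m.1]
      rcases lt_or_eq_of_le (show v₂ ≤ 2*π from hv2m.2) with h | h
      · exact h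
      · exact absurd (h.trans hW.2.symm) h23
    refine caseC (fun n => C (φ n) - 2*π) _ _ 0 v₂ hCA (hshiftz _ hCz) hAz hBz
      ?_ ?_ hBlim hw1 habs
    · have := hCsh; rw [hW.2, sub_self] at this; exact this
    · rw [← hv10]; exact hAlim
  -- 8: three distinct points: vertical plane with three intersections
  · have hlt12 : v₁ < v₂ := lt_of_le_of_ne hv12 h12
    have hlt23 : v₂ < v₃ := lt_of_le_of_ne hv23 h23
    have hfv1 : (inner ℝ m (γ v₁) : ℝ) = d := level _ v₁ hAlim hAz
    have hfv2 : (inner ℝ m (γ v₂) : ℝ) = d := level _ v₂ hBlim hBz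
    have hfv3 : (inner ℝ m (γ v₃) : ℝ) = d := level _ v₃ hClim hCz
    have h3 := three_level (fun u => (inner ℝ m (γ u) : ℝ)) hfper d hfv1 hfv2 hfv3
      (ne_of_lt hlt12) (ne_of_lt (hlt12.trans hlt23)) (ne_of_lt hlt23)
      (by rw [abs_of_nonpos (by linarith)]; linarith [hv1m.1, hv3m.2])
      (by rw [abs_of_nonpos (by linarith)]
          rcases lt_or_eq_of_le (show -(v₁ - v₃) ≤ 2*π by linarith [hv1m.1, hv3m.2]) with h | h
          · exact h
          · exact absurd ⟨by linarith, by linarith⟩ hW)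
      (by rw [abs_of_nonpos (by linarith)]; linarith [hv1m.1, hv3m.2])
    exact absurd (h3.trans (hcount d)) (by decide)
end

section
/- Let γ : S¹ → ℝ³ be a smooth immersed closed curve satisfying the three-point condition with constant Δ ∈ [0,∞). Then for any two points q₁ = (x₁,y₁,z₁) and q₂ = (x₂,y₂,z₂) in the image of γ, one has (z₁ − z₂)² ≤ Δ² [(x₁ − x₂)² + (y₁ − y₂)²]. -/
open Set

lemma inner3_eq (x y : EuclideanSpace ℝ (Fin 3)) :
    (inner ℝ x y : ℝ) = x 0 * y 0 + x 1 * y 1 + x 2 * y 2 := by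
  simp [EuclideanSpace.inner_eq_star_dotProduct, Fin.sum_univ_three, dotProduct]
  ring

lemma eucl3_ext {x y : EuclideanSpace ℝ (Fin 3)} (h0 : x 0 = y 0) (h1 : x 1 = y 1)
    (h2 : x 2 = y 2) : x = y := by
  apply PiLp.ext
  intro i
  fin_cases i <;> assumption

lemma sq_add_sq_nonpos {a c : ℝ} (h : a^2 + c^2 ≤ 0) : a = 0 ∧ c = 0 := by
  constructor <;> nlinarith [sq_nonneg a, sq_nonneg c]

lemma final_aux {m0 m1 m2 v0 v1 v2 Δ : ℝ} (hsq : m0^2 + m1^2 ≤ Δ^2 * m2^2)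
    (hinner : m0*v0 + m1*v1 + m2*v2 = 0) (hcon : Δ^2 * (v0^2 + v1^2) < v2^2)
    (hm2 : m2 ≠ 0) : False := by
  have hpos : 0 < m2^2 := by positivity
  have e : m2*v2 = -(m0*v0 + m1*v1) := by linarith
  have h1 : (m2*v2)^2 ≤ (m0^2 + m1^2)*(v0^2 + v1^2) := by
    rw [e]; nlinarith [sq_nonneg (m0*v1 - m1*v0)]
  have h2 : (m0^2 + m1^2)*(v0^2 + v1^2) ≤ Δ^2*m2^2*(v0^2 + v1^2) :=
    mul_le_mul_of_nonneg_right hsq (by positivity)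
  nlinarith [h1, h2, mul_lt_mul_of_pos_left hcon hpos]

lemma two_pi_pos' : (0:ℝ) < 2 * Real.pi := by positivity


theorem statement16'
    (γ : ℝ → EuclideanSpace ℝ (Fin 3))
    (hsm : ContDiff ℝ (⊤ : ℕ∞) γ)
    (hper : ∀ u, γ (u + 2*Real.pi) = γ u)
    (himm : ∀ u, deriv γ u ≠ 0)
    (Δ : ℝ) (hΔ : 0 ≤ Δ)
    (h3pt : ∀ (m : EuclideanSpace ℝ (Fin 3)) (d : ℝ), m ≠ 0 →
      (3 : ℕ∞) ≤ ({u ∈ Set.Ico (0:ℝ) (2*Real.pi) | (inner ℝ m (γ u) : ℝ) = d}).encard →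
      Real.sqrt ((m 0)^2 + (m 1)^2) ≤ Δ * |m 2|) :
    ∀ u₁ u₂ : ℝ,
      (γ u₁ 2 - γ u₂ 2)^2 ≤ Δ^2 * ((γ u₁ 0 - γ u₂ 0)^2 + (γ u₁ 1 - γ u₂ 1)^2) := by
  intro u₁ u₂
  by_contra hcon
  push_neg at hcon
  obtain ⟨v, hvdef⟩ : ∃ v : EuclideanSpace ℝ (Fin 3), v = γ u₁ - γ u₂ := ⟨_, rfl⟩
  have hvi : ∀ i, v i = γ u₁ i - γ u₂ i := fun i => by simp [hvdef]
  have hcon' : Δ^2 * ((v 0)^2 + (v 1)^2) < (v 2)^2 := by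
    rw [hvi 0, hvi 1, hvi 2]; exact hcon
  have hv2 : v 2 ≠ 0 := by
    intro h
    rw [h] at hcon'
    nlinarith [sq_nonneg (v 0), sq_nonneg (v 1), sq_nonneg Δ]
  have hq : γ u₁ ≠ γ u₂ := by
    intro h
    apply hv2
    rw [hvi 2, h, sub_self]
  have hdiff : Differentiable ℝ γ := hsm.differentiable (by simp)
  have hγper : Function.Periodic γ (2*Real.pi) := hper
  -- find a third point not on the line through γ u₁ and γ u₂
  obtain ⟨u₃, hu₃⟩ : ∃ u, ∀ t : ℝ, γ u - γ u₂ ≠ t • v := by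
    by_contra H
    push_neg at H
    have key : ∀ w : EuclideanSpace ℝ (Fin 3), (inner ℝ w v : ℝ) = 0 →
        ∀ u, (inner ℝ w (γ u) : ℝ) = inner ℝ w (γ u₂) := by
      intro w hw u
      obtain ⟨t, ht⟩ := H u
      have hgu : γ u = γ u₂ + t • v := by rw [← ht]; abel
      rw [hgu, inner_add_right, inner_smul_right, hw, mul_zero, add_zero]
    set φ : ℝ → ℝ := fun u => inner ℝ v (γ u) with hφdef
    have hφc : Continuous φ := Continuous.inner continuous_const hdiff.continuous
    have hφper : Function.Periodic φ (2*Real.pi) := fun u => by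
      simp only [hφdef, hper u]
    obtain ⟨u₀, _, hmax⟩ := (isCompact_Icc (a := (0:ℝ)) (b := 2*Real.pi)).exists_isMaxOn
      (nonempty_Icc.2 (by positivity)) hφc.continuousOn
    have hmax' : ∀ u, φ u ≤ φ u₀ := by
      intro u
      obtain ⟨y, hy, hxy⟩ := hφper.exists_mem_Ico₀ two_pi_pos' u
      rw [hxy]
      exact hmax (Ico_subset_Icc_self hy)
    have hφd : ∀ w : EuclideanSpace ℝ (Fin 3), ∀ u : ℝ,
        HasDerivAt (fun x => (inner ℝ w (γ x) : ℝ)) (inner ℝ w (deriv γ u)) u := by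
      intro w u
      have h1 : HasDerivAt γ (deriv γ u) u := (hdiff u).hasDerivAt
      have h2 := HasDerivAt.inner ℝ (hasDerivAt_const u w) h1
      simpa using h2
    -- derivative of φ at the max point is 0
    have hd0 : (inner ℝ v (deriv γ u₀) : ℝ) = 0 := by
      have hloc : IsLocalMax φ u₀ := Filter.Eventually.of_forall hmax'
      have h := hloc.deriv_eq_zero
      rw [(hφd v u₀).deriv] at h
      exact h
    set D := deriv γ u₀ with hD
    have hDv : (inner ℝ D v : ℝ) = 0 := by rw [real_inner_comm]; exact hd0
    have hconst : (fun u => (inner ℝ D (γ u) : ℝ)) = fun _ => (inner ℝ D (γ u₂) : ℝ) :=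
      funext (key D hDv)
    have hDD : (inner ℝ D D : ℝ) = 0 := by
      have h1 := (hφd D u₀).deriv
      rw [hconst, deriv_const] at h1
      exact h1.symm
    exact himm u₀ (inner_self_eq_zero.mp hDD)
  have hγ3ne2 : γ u₃ ≠ γ u₂ := by
    intro h
    exact hu₃ 0 (by rw [h, sub_self, zero_smul])
  have hγ3ne1 : γ u₃ ≠ γ u₁ := by
    intro h
    apply hu₃ 1
    rw [h, one_smul, hvdef]
  obtain ⟨b, hbdef⟩ : ∃ b : EuclideanSpace ℝ (Fin 3), b = γ u₃ - γ u₂ := ⟨_, rfl⟩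
  -- the normal vector: cross product v × b
  obtain ⟨m, hm0, hm1, hm2⟩ : ∃ m : EuclideanSpace ℝ (Fin 3),
      m 0 = v 1 * b 2 - v 2 * b 1 ∧ m 1 = v 2 * b 0 - v 0 * b 2 ∧
      m 2 = v 0 * b 1 - v 1 * b 0 :=
    ⟨(WithLp.equiv 2 (Fin 3 → ℝ)).symm
      ![v 1 * b 2 - v 2 * b 1, v 2 * b 0 - v 0 * b 2, v 0 * b 1 - v 1 * b 0],
      by simp, by simp, by simp⟩
  have hmv : (inner ℝ m v : ℝ) = 0 := by
    rw [inner3_eq, hm0, hm1, hm2]; ring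
  have hmb : (inner ℝ m b : ℝ) = 0 := by
    rw [inner3_eq, hm0, hm1, hm2]; ring
  have hmne : m ≠ 0 := by
    intro h
    have h0 : v 1 * b 2 - v 2 * b 1 = 0 := by rw [← hm0, h]; rfl
    have h1 : v 2 * b 0 - v 0 * b 2 = 0 := by rw [← hm1, h]; rfl
    have h2 : v 0 * b 1 - v 1 * b 0 = 0 := by rw [← hm2, h]; rfl
    apply hu₃ (b 2 / v 2)
    rw [← hbdef]
    apply eucl3_ext
    · rw [PiLp.smul_apply, smul_eq_mul]
      field_simp
      linear_combination h1
    · rw [PiLp.smul_apply, smul_eq_mul]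
      field_simp
      linear_combination -h0
    · rw [PiLp.smul_apply, smul_eq_mul]
      field_simp
  -- three distinct parameters in [0, 2π) on the plane ⟨m, ·⟩ = d
  obtain ⟨d, hddef⟩ : ∃ d : ℝ, d = (inner ℝ m (γ u₂) : ℝ) := ⟨_, rfl⟩
  obtain ⟨w₁, hw₁, hw₁e⟩ := hγper.exists_mem_Ico₀ two_pi_pos' u₁
  obtain ⟨w₂, hw₂, hw₂e⟩ := hγper.exists_mem_Ico₀ two_pi_pos' u₂
  obtain ⟨w₃, hw₃, hw₃e⟩ := hγper.exists_mem_Ico₀ two_pi_pos' u₃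
  have h12 : w₁ ≠ w₂ := fun h => hq (by rw [hw₁e, hw₂e, h])
  have h13 : w₁ ≠ w₃ := fun h => hγ3ne1 (by rw [hw₃e, hw₁e, h])
  have h23 : w₂ ≠ w₃ := fun h => hγ3ne2 (by rw [hw₃e, hw₂e, h])
  have hsubset : {w₁, w₂, w₃} ⊆ {u ∈ Set.Ico (0:ℝ) (2*Real.pi) | (inner ℝ m (γ u) : ℝ) = d} := by
    have e1 : (inner ℝ m (γ w₁) : ℝ) = d := by
      rw [← hw₁e, hddef]
      have hh : γ u₁ = γ u₂ + v := by rw [hvdef]; abel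
      rw [hh, inner_add_right, hmv, add_zero]
    have e2 : (inner ℝ m (γ w₂) : ℝ) = d := by rw [← hw₂e, hddef]
    have e3 : (inner ℝ m (γ w₃) : ℝ) = d := by
      rw [← hw₃e, hddef]
      have hh : γ u₃ = γ u₂ + b := by rw [hbdef]; abel
      rw [hh, inner_add_right, hmb, add_zero]
    intro x hx
    simp only [Set.mem_insert_iff, Set.mem_singleton_iff] at hx
    rcases hx with rfl | rfl | rfl
    · exact ⟨hw₁, e1⟩
    · exact ⟨hw₂, e2⟩
    · exact ⟨hw₃, e3⟩
  have hcard : (3 : ℕ∞) ≤ ({u ∈ Set.Ico (0:ℝ) (2*Real.pi) | (inner ℝ m (γ u) : ℝ) = d}).encard := by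
    refine le_trans ?_ (Set.encard_mono hsubset)
    rw [Set.encard_insert_of_notMem (by simp [h12, h13]),
      Set.encard_insert_of_notMem (by simp [h23]), Set.encard_singleton]
    norm_num
  have hslope := h3pt m d hmne hcard
  -- squaring
  have hsq : (m 0)^2 + (m 1)^2 ≤ Δ^2 * (m 2)^2 := by
    have h1 : Real.sqrt ((m 0)^2 + (m 1)^2) ^ 2 ≤ (Δ * |m 2|)^2 :=
      pow_le_pow_left₀ (Real.sqrt_nonneg _) hslope 2
    rw [Real.sq_sqrt (by positivity)] at h1
    calc (m 0)^2 + (m 1)^2 ≤ (Δ * |m 2|)^2 := h1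
      _ = Δ^2 * (m 2)^2 := by rw [mul_pow, sq_abs]
  -- final contradiction
  have hinner : m 0 * v 0 + m 1 * v 1 + m 2 * v 2 = 0 := by
    rw [← inner3_eq]; exact hmv
  by_cases hm2z : m 2 = 0
  · rw [hm2z] at hsq
    have hsq' : (m 0)^2 + (m 1)^2 ≤ 0 := by
      have : Δ^2 * (0:ℝ)^2 = 0 := by ring
      linarith [hsq, this.le]
    obtain ⟨hz0, hz1⟩ := sq_add_sq_nonpos hsq'
    exact hmne (eucl3_ext (by rw [hz0]; rfl) (by rw [hz1]; rfl) (by rw [hm2z]; rfl))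
  · exact final_aux hsq hinner hcon' hm2z

/-- If a smooth immersed closed curve in `ℝ³` satisfies the three-point
condition with constant `Δ`, then for any two points `q₁, q₂` of its image,
`(z₁ − z₂)² ≤ Δ² [(x₁ − x₂)² + (y₁ − y₂)²]`. -/
theorem statement16
    (γ : ℝ → EuclideanSpace ℝ (Fin 3))
    (hsm : ContDiff ℝ (⊤ : ℕ∞) γ)
    (hper : ∀ u, γ (u + 2*Real.pi) = γ u)
    (himm : ∀ u, deriv γ u ≠ 0)
    (Δ : ℝ) (hΔ : 0 ≤ Δ)
    (h3pt : ThreePointCond γ Δ) :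
    ∀ u₁ u₂ : ℝ,
      (γ u₁ 2 - γ u₂ 2)^2 ≤ Δ^2 * ((γ u₁ 0 - γ u₂ 0)^2 + (γ u₁ 1 - γ u₂ 1)^2) := by
  exact statement16' γ hsm hper himm Δ hΔ h3pt
end
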